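/- arXiv:1506.00180 — 6 statements merged into one kernel-verified Lean document; each statement's English description precedes it below -/
import Mathlib

section
/- Let G be a finite simple graph containing a clique C with N[v] = N[w] for all v, w ∈ C, and let G' be the graph obtained from G by contracting all edges within C (i.e., replacing C by a single vertex adjacent to N(C) \ C). Then for every field F, wcdim(G, F) = wcdim(G', F). -/
/-- `M` is an independent set of `G` (as a finset): pairwise non-adjacent vertices. -/
def IsIndepF {V : Type*} (G : SimpleGraph V) (M : Finset V) : Prop :=
  ∀ v ∈ M, ∀ w ∈ M, ¬ G.Adj v w

/-- `M` is a maximal independent set of `G`: independent and not properly contained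
in any other independent set. -/
def IsMaxIndepF {V : Type*} (G : SimpleGraph V) (M : Finset V) : Prop :=
  IsIndepF G M ∧ ∀ M' : Finset V, IsIndepF G M' → M ⊆ M' → M' = M

/-- The well-covered space of `G` over `F`: all weightings `w : V → F` whose sum over
every maximal independent set of `G` is the same constant. -/
def wcSpace (F : Type*) [Field F] {V : Type*} (G : SimpleGraph V) : Submodule F (V → F) where
  carrier := {w | ∀ M N : Finset V, IsMaxIndepF G M → IsMaxIndepF G N →
    ∑ v ∈ M, w v = ∑ v ∈ N, w v}
  add_mem' := by
    intro a b ha hb M N hM hN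
    simp only [Pi.add_apply, Finset.sum_add_distrib, ha M N hM hN, hb M N hM hN]
  zero_mem' := by intro M N _ _; simp
  smul_mem' := by
    intro c a ha M N hM hN
    simp only [Pi.smul_apply, smul_eq_mul, ← Finset.mul_sum, ha M N hM hN]

/-- The well-covered dimension of `G` over `F`. -/
noncomputable def wcdim (F : Type*) [Field F] {V : Type*} (G : SimpleGraph V) : ℕ :=
  Module.finrank F (wcSpace F G)

set_option linter.unusedSectionVars false

lemma isMaxIndepF_iff {V : Type*} [DecidableEq V] (G : SimpleGraph V) (M : Finset V) :
    IsMaxIndepF G M ↔ IsIndepF G M ∧ ∀ x, x ∉ M → ∃ y ∈ M, G.Adj x y := by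
  constructor
  · rintro ⟨h1, h2⟩
    refine ⟨h1, fun x hx => ?_⟩
    by_contra hcon
    push_neg at hcon
    have hind : IsIndepF G (insert x M) := by
      intro a ha b hb hadj
      rcases Finset.mem_insert.1 ha with ha' | ha' <;>
      rcases Finset.mem_insert.1 hb with hb' | hb'
      · exact G.irrefl (ha' ▸ hb' ▸ hadj)
      · exact hcon b hb' (ha' ▸ hadj)
      · exact hcon a ha' (hb' ▸ hadj.symm)
      · exact h1 a ha' b hb' hadj
    have := h2 _ hind (Finset.subset_insert _ _)
    exact hx (by rw [← this]; exact Finset.mem_insert_self x M)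
  · rintro ⟨h1, h2⟩
    refine ⟨h1, fun M' hM' hsub => ?_⟩
    apply Finset.Subset.antisymm _ hsub
    intro x hx
    by_contra hxM
    obtain ⟨y, hy, hadj⟩ := h2 x hxM
    exact hM' x hx y (hsub hy) hadj

lemma exists_maxIndepF_mem {V : Type*} [Fintype V] [DecidableEq V] (G : SimpleGraph V) (v : V) :
    ∃ M, IsMaxIndepF G M ∧ v ∈ M := by
  classical
  have hne : ({v} : Finset V) ∈
      (Finset.univ.filter fun M : Finset V => IsIndepF G M ∧ v ∈ M) := by
    simp only [Finset.mem_filter, Finset.mem_univ, true_and, Finset.mem_singleton]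
    refine ⟨?_, by simp⟩
    intro a ha b hb
    simp only [Finset.mem_singleton] at ha hb
    subst ha; subst hb
    exact G.irrefl
  obtain ⟨M, hM, hmax⟩ := Finset.exists_max_image _ (fun M : Finset V => M.card) ⟨_, hne⟩
  simp only [Finset.mem_filter, Finset.mem_univ, true_and] at hM
  refine ⟨M, ⟨hM.1, fun M' hM' hsub => ?_⟩, hM.2⟩
  have hM'mem : M' ∈ (Finset.univ.filter fun M : Finset V => IsIndepF G M ∧ v ∈ M) := by
    simp only [Finset.mem_filter, Finset.mem_univ, true_and]
    exact ⟨hM', hsub hM.2⟩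
  exact (Finset.eq_of_subset_of_card_le hsub (hmax M' hM'mem)).symm

section Clique
variable {V : Type*} [DecidableEq V] {G : SimpleGraph V} {C : Finset V}

lemma adj_swap (hnbhd : ∀ v ∈ C, ∀ w ∈ C,
      insert v (G.neighborSet v) = insert w (G.neighborSet w))
    {a b u : V} (ha : a ∈ C) (hb : b ∈ C) (hu : G.Adj u a) (hub : u ≠ b) : G.Adj u b := by
  have h := hnbhd a ha b hb
  have hmem : u ∈ insert a (G.neighborSet a) := Set.mem_insert_iff.2 (Or.inr hu.symm)
  rw [h] at hmem
  rcases Set.mem_insert_iff.1 hmem with h' | h'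
  · exact absurd h' hub
  · exact h'.symm

lemma swap_maxIndepF (hclique : ∀ v ∈ C, ∀ w ∈ C, v ≠ w → G.Adj v w)
    (hnbhd : ∀ v ∈ C, ∀ w ∈ C,
      insert v (G.neighborSet v) = insert w (G.neighborSet w))
    {M : Finset V} (hM : IsMaxIndepF G M) {v b : V} (hvM : v ∈ M) (hvC : v ∈ C) (hbC : b ∈ C) :
    IsMaxIndepF G (insert b (M.erase v)) := by
  rcases eq_or_ne v b with rfl | hvb
  · rwa [Finset.insert_erase hvM]
  rw [isMaxIndepF_iff] at hM ⊢
  obtain ⟨h1, h2⟩ := hM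
  have key : ∀ u ∈ M.erase v, ¬ G.Adj u b := by
    intro u hu hadj
    have huv : u ≠ v := Finset.ne_of_mem_erase hu
    exact h1 u (Finset.mem_of_mem_erase hu) v hvM (adj_swap hnbhd hbC hvC hadj huv)
  constructor
  · intro x hx y hy hadj
    rcases Finset.mem_insert.1 hx with hx' | hx' <;> rcases Finset.mem_insert.1 hy with hy' | hy'
    · exact G.irrefl (hx' ▸ hy' ▸ hadj)
    · exact key y hy' (hx' ▸ hadj.symm)
    · exact key x hx' (hy' ▸ hadj)
    · exact h1 x (Finset.mem_of_mem_erase hx') y (Finset.mem_of_mem_erase hy') hadj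
  · intro x hx
    rw [Finset.mem_insert] at hx
    push_neg at hx
    obtain ⟨hxb, hxe⟩ := hx
    rcases eq_or_ne x v with rfl | hxv
    · exact ⟨b, Finset.mem_insert_self _ _, hclique x hvC b hbC hvb⟩
    · have hxM : x ∉ M := fun h => hxe (Finset.mem_erase.2 ⟨hxv, h⟩)
      obtain ⟨y, hy, hadj⟩ := h2 x hxM
      rcases eq_or_ne y v with rfl | hyv
      · exact ⟨b, Finset.mem_insert_self _ _, adj_swap hnbhd hvC hbC hadj hxb⟩
      · exact ⟨y, Finset.mem_insert_of_mem (Finset.mem_erase.2 ⟨hyv, hy⟩), hadj⟩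

lemma wc_const_on_clique {V : Type*} [Fintype V] [DecidableEq V] {G : SimpleGraph V}
    {C : Finset V} (F : Type*) [Field F]
    (hclique : ∀ v ∈ C, ∀ w ∈ C, v ≠ w → G.Adj v w)
    (hnbhd : ∀ v ∈ C, ∀ w ∈ C,
      insert v (G.neighborSet v) = insert w (G.neighborSet w))
    {w : V → F} (hw : w ∈ wcSpace F G) {a b : V} (ha : a ∈ C) (hb : b ∈ C) : w a = w b := by
  rcases eq_or_ne a b with rfl | hab
  · rfl
  obtain ⟨M, hM, haM⟩ := exists_maxIndepF_mem G a
  have hM2 := swap_maxIndepF hclique hnbhd hM haM ha hb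
  have hsum := hw M _ hM hM2
  have hbM : b ∉ M.erase a := by
    intro h
    exact hM.1 a haM b (Finset.mem_of_mem_erase h) (hclique a ha b hb hab)
  rw [Finset.sum_insert hbM, ← Finset.add_sum_erase M w haM] at hsum
  exact add_right_cancel hsum

end Clique

section Induce
variable {V : Type*} [DecidableEq V] {G : SimpleGraph V}

lemma maxIndep_lift {S : Set V} [DecidablePred (· ∈ S)] {M : Finset V} (hMS : ∀ x ∈ M, x ∈ S)
    (hM : IsMaxIndepF G M) : IsMaxIndepF (G.induce S) (M.subtype (· ∈ S)) := by
  rw [isMaxIndepF_iff] at hM ⊢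
  refine ⟨?_, ?_⟩
  · intro a ha b hb hadj
    rw [Finset.mem_subtype] at ha hb
    exact hM.1 _ ha _ hb hadj
  · intro x hx
    rw [Finset.mem_subtype] at hx
    obtain ⟨y, hy, hadj⟩ := hM.2 x hx
    exact ⟨⟨y, hMS y hy⟩, Finset.mem_subtype.2 hy, hadj⟩

lemma maxIndep_proj {C : Finset V}
    (hclique : ∀ v ∈ C, ∀ w ∈ C, v ≠ w → G.Adj v w)
    (hnbhd : ∀ v ∈ C, ∀ w ∈ C,
      insert v (G.neighborSet v) = insert w (G.neighborSet w))
    {c : V} (hc : c ∈ C) [DecidablePred (· ∈ ({x : V | x = c ∨ x ∉ C} : Set V))]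
    {T : Finset ↥({x : V | x = c ∨ x ∉ C} : Set V)}
    (hT : IsMaxIndepF (G.induce {x : V | x = c ∨ x ∉ C}) T) :
    IsMaxIndepF G (T.map (Function.Embedding.subtype _)) := by
  rw [isMaxIndepF_iff] at hT ⊢
  refine ⟨?_, ?_⟩
  · intro a ha b hb hadj
    rw [Finset.mem_map] at ha hb
    obtain ⟨a', ha', rfl⟩ := ha
    obtain ⟨b', hb', rfl⟩ := hb
    exact hT.1 a' ha' b' hb' hadj
  · intro x hx
    by_cases hxS : x ∈ ({x : V | x = c ∨ x ∉ C} : Set V)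
    · have hxT : (⟨x, hxS⟩ : ↥({x : V | x = c ∨ x ∉ C} : Set V)) ∉ T := by
        intro h
        exact hx (Finset.mem_map.2 ⟨_, h, rfl⟩)
      obtain ⟨y, hy, hadj⟩ := hT.2 _ hxT
      exact ⟨↑y, Finset.mem_map.2 ⟨y, hy, rfl⟩, hadj⟩
    · have hxc : x ≠ c := fun h => hxS (Or.inl h)
      have hxC : x ∈ C := by
        by_contra h
        exact hxS (Or.inr h)
      set cS : ↥({x : V | x = c ∨ x ∉ C} : Set V) := ⟨c, Or.inl rfl⟩ with hcS
      by_cases hcT : cS ∈ T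
      · exact ⟨c, Finset.mem_map.2 ⟨cS, hcT, rfl⟩, hclique x hxC c hc hxc⟩
      · obtain ⟨y, hy, hadj⟩ := hT.2 cS hcT
        have hyx : (y : V) ≠ x := by
          intro h
          exact hxS (h ▸ y.2)
        have : G.Adj (y : V) x := adj_swap hnbhd hc hxC (G.adj_symm hadj) hyx
        exact ⟨↑y, Finset.mem_map.2 ⟨y, hy, rfl⟩, this.symm⟩

end Induce

/-- Contracting a clique `C` all of whose vertices share the same closed neighborhood
does not change the well-covered dimension.  The contracted graph is realized as the
induced subgraph on `(V \ C) ∪ {c}` for a chosen `c ∈ C`: the vertex `c` plays the role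
of the contracted vertex, and by the closed-neighborhood hypothesis it is adjacent to
exactly `N(C) \ C`. -/
theorem wcdim_contract_clique {V : Type*} [Fintype V] [DecidableEq V] (G : SimpleGraph V)
    (F : Type*) [Field F] (C : Finset V)
    (hclique : ∀ v ∈ C, ∀ w ∈ C, v ≠ w → G.Adj v w)
    (hnbhd : ∀ v ∈ C, ∀ w ∈ C,
      insert v (G.neighborSet v) = insert w (G.neighborSet w))
    (c : V) (hc : c ∈ C) :
    wcdim F (G.induce {x : V | x = c ∨ x ∉ C}) = wcdim F G := by
  classical
  set S : Set V := {x : V | x = c ∨ x ∉ C} with hS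
  have hcS : c ∈ S := Or.inl rfl
  set r : V → ↥S := fun x => if h : x ∈ S then ⟨x, h⟩ else ⟨c, hcS⟩ with hr
  have hrS : ∀ u : ↥S, r ↑u = u := by
    intro u
    simp only [hr, dif_pos u.2]
  have hrC : ∀ x ∈ C, r x = ⟨c, hcS⟩ := by
    intro x hxC
    by_cases h : x ∈ S
    · have hxc : x = c := by
        rcases h with h | h
        · exact h
        · exact absurd hxC h
      subst hxc
      simp only [hr, dif_pos h]
    · simp only [hr, dif_neg h]
  set Ψ : (↥S → F) →ₗ[F] (V → F) := LinearMap.funLeft F F r with hΨ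
  set Φ : (V → F) →ₗ[F] (↥S → F) := LinearMap.funLeft F F (Subtype.val) with hΦ
  -- lifting sums
  have hsumlift : ∀ (w' : ↥S → F) (M₂ : Finset V), (∀ x ∈ M₂, x ∈ S) →
      ∑ x ∈ M₂, Ψ w' x = ∑ u ∈ M₂.subtype (· ∈ S), w' u := by
    intro w' M₂ hM₂S
    rw [show (∑ u ∈ M₂.subtype (· ∈ S), w' u) = ∑ u ∈ M₂.subtype (· ∈ S), Ψ w' ↑u from
      Finset.sum_congr rfl (fun u _ => by
        simp only [hΨ, LinearMap.funLeft_apply, hrS u])]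
    rw [Finset.sum_subtype_eq_sum_filter, Finset.filter_true_of_mem hM₂S]
  have key : ∀ (w' : ↥S → F), ∀ M : Finset V, IsMaxIndepF G M →
      ∃ T : Finset ↥S, IsMaxIndepF (G.induce S) T ∧ ∑ x ∈ M, Ψ w' x = ∑ u ∈ T, w' u := by
    intro w' M hM
    by_cases hMC : ∃ v ∈ M, v ∈ C
    · obtain ⟨v, hvM, hvC⟩ := hMC
      have hM₂ : IsMaxIndepF G (insert c (M.erase v)) :=
        swap_maxIndepF hclique hnbhd hM hvM hvC hc
      have herase_notC : ∀ x ∈ M.erase v, x ∉ C := fun x hx hxC =>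
        hM.1 x (Finset.mem_of_mem_erase hx) v hvM
          (hclique x hxC v hvC (Finset.ne_of_mem_erase hx))
      have hM₂S : ∀ x ∈ insert c (M.erase v), x ∈ S := by
        intro x hx
        rcases Finset.mem_insert.1 hx with rfl | hx
        · exact hcS
        · exact Or.inr (herase_notC x hx)
      refine ⟨(insert c (M.erase v)).subtype (· ∈ S), maxIndep_lift hM₂S hM₂, ?_⟩
      rw [← hsumlift w' _ hM₂S]
      have hcM : c ∉ M.erase v := fun h => herase_notC c h hc
      rw [Finset.sum_insert hcM, ← Finset.add_sum_erase M (Ψ w') hvM]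
      congr 1
      simp only [hΨ, LinearMap.funLeft_apply, hrC v hvC, hrC c hc]
    · push_neg at hMC
      have hMS : ∀ x ∈ M, x ∈ S := fun x hx => Or.inr (hMC x hx)
      exact ⟨M.subtype (· ∈ S), maxIndep_lift hMS hM, hsumlift w' M hMS⟩
  have hΨmem : ∀ w' ∈ wcSpace F (G.induce S), Ψ w' ∈ wcSpace F G := by
    intro w' hw' M N hM hN
    obtain ⟨T, hT, hTs⟩ := key w' M hM
    obtain ⟨T', hT', hTs'⟩ := key w' N hN
    rw [hTs, hTs']
    exact hw' T T' hT hT'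
  have hΦmem : ∀ w ∈ wcSpace F G, Φ w ∈ wcSpace F (G.induce S) := by
    intro w hw M' N' hM' hN'
    have h1 := maxIndep_proj hclique hnbhd hc hM'
    have h2 := maxIndep_proj hclique hnbhd hc hN'
    have := hw _ _ h1 h2
    simpa only [Finset.sum_map, Function.Embedding.coe_subtype, hΦ,
      LinearMap.funLeft_apply] using this
  let Ψ' : wcSpace F (G.induce S) →ₗ[F] wcSpace F G :=
    LinearMap.codRestrict _ (Ψ.comp (Submodule.subtype _)) (fun x => hΨmem _ x.2)
  let Φ' : wcSpace F G →ₗ[F] wcSpace F (G.induce S) :=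
    LinearMap.codRestrict _ (Φ.comp (Submodule.subtype _)) (fun x => hΦmem _ x.2)
  have h1 : Ψ'.comp Φ' = LinearMap.id := by
    apply LinearMap.ext
    intro x
    apply Subtype.ext
    funext v
    show Ψ (Φ ↑x) v = (↑x : V → F) v
    simp only [hΨ, hΦ, LinearMap.funLeft_apply]
    by_cases h : v ∈ S
    · simp only [hr, dif_pos h]
    · have hvC : v ∈ C := by
        by_contra hvC
        exact h (Or.inr hvC)
      simp only [hr, dif_neg h]
      exact (wc_const_on_clique F hclique hnbhd x.2 hc hvC)
  have h2 : Φ'.comp Ψ' = LinearMap.id := by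
    apply LinearMap.ext
    intro x
    apply Subtype.ext
    funext u
    show Φ (Ψ ↑x) u = (↑x : ↥S → F) u
    simp only [hΨ, hΦ, LinearMap.funLeft_apply, hrS u]
  exact (LinearEquiv.ofLinear Ψ' Φ' h1 h2).finrank_eq
end

section
/- Let G be a finite simple graph, v ∈ V(G) and n ∈ ℕ with n ≥ 1. Define G_{v,n} as the graph obtained from G by deleting v and adding a complete graph Kₙ on n new vertices, each new vertex being adjacent to every vertex of N_G(v). Then for every field F, wcdim(G_{v,n}, F) = wcdim(G, F). -/
/-- `G_{v,n}`: delete `v` from `G` and add a complete graph `Kₙ` on `n` new vertices, each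
new vertex adjacent to every vertex of `N_G(v)`. -/
def expandVertex {V : Type*} (G : SimpleGraph V) (v : V) (n : ℕ) :
    SimpleGraph ({u : V // u ≠ v} ⊕ Fin n) :=
  SimpleGraph.fromRel fun x y =>
    match x, y with
    | Sum.inl a, Sum.inl b => G.Adj a.1 b.1
    | Sum.inl a, Sum.inr _ => G.Adj a.1 v
    | Sum.inr _, Sum.inl b => G.Adj b.1 v
    | Sum.inr _, Sum.inr _ => True

/-! Collapsing the clique `Kₙ` of `G_{v,n}` onto `v`, and sending `v` to one fixed clique vertex,
both map maximal independent sets to maximal independent sets, injectively on each of them.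
Pulling weightings back along these two maps therefore gives linear maps between the two
well-covered spaces; they are mutually inverse because a well-covered weighting of `G_{v,n}` is
constant on the clique: exchanging the clique vertex in a maximal independent set through `v`
yields another maximal independent set. -/

section IndependentSets

variable {α : Type*} {G : SimpleGraph α} {M : Finset α}

lemma isIndepF_singleton (a : α) : IsIndepF G {a} := by
  intro x hx y hy
  rw [Finset.mem_singleton] at hx hy
  subst hx hy
  exact G.irrefl

lemma IsIndepF.insert [DecidableEq α] (hM : IsIndepF G M) {a : α} (ha : ∀ b ∈ M, ¬ G.Adj a b) :
    IsIndepF G (insert a M) := by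
  intro x hx y hy
  rcases Finset.mem_insert.1 hx with hxa | hx <;> rcases Finset.mem_insert.1 hy with hya | hy
  · exact hxa ▸ hya ▸ G.irrefl
  · exact hxa ▸ ha y hy
  · exact hya ▸ fun h => ha x hx h.symm
  · exact hM x hx y hy

lemma IsMaxIndepF.mem_of_forall_not_adj [DecidableEq α] (hM : IsMaxIndepF G M) {a : α}
    (ha : ∀ b ∈ M, ¬ G.Adj a b) : a ∈ M :=
  hM.2 _ (IsIndepF.insert hM.1 ha) (Finset.subset_insert a M) ▸ Finset.mem_insert_self a M

lemma exists_isMaxIndepF_superset [Finite α] {S : Finset α} (hS : IsIndepF G S) :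
    ∃ M, IsMaxIndepF G M ∧ S ⊆ M := by
  obtain ⟨M, ⟨hM, hSM⟩, hmax⟩ := Set.Finite.exists_maximalFor id
    {M : Finset α | IsIndepF G M ∧ S ⊆ M} (Set.toFinite _) ⟨S, hS, subset_rfl⟩
  exact ⟨M, ⟨hM, fun M' hM' hMM' => (hmax ⟨hM', hSM.trans hMM'⟩ hMM').antisymm hMM'⟩, hSM⟩

end IndependentSets

lemma comp_mem_wcSpace {F : Type*} [Field F] {V W : Type*} [DecidableEq V] {G : SimpleGraph V}
    {H : SimpleGraph W} {f : W → V}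
    (hf : ∀ M, IsMaxIndepF H M → IsMaxIndepF G (M.image f) ∧ Set.InjOn f M)
    {w : V → F} (hw : w ∈ wcSpace F G) : w ∘ f ∈ wcSpace F H := by
  intro M N hM hN
  obtain ⟨hfM, hinjM⟩ := hf M hM
  obtain ⟨hfN, hinjN⟩ := hf N hN
  calc ∑ x ∈ M, w (f x)
      = ∑ u ∈ M.image f, w u := (Finset.sum_image hinjM).symm
    _ = ∑ u ∈ N.image f, w u := hw _ _ hfM hfN
    _ = ∑ x ∈ N, w (f x) := Finset.sum_image hinjN

namespace expandVertex

variable {V : Type*} {G : SimpleGraph V} {v : V} {n : ℕ}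

lemma adj_inl_inl (a b : {u : V // u ≠ v}) :
    (expandVertex G v n).Adj (.inl a) (.inl b) ↔ G.Adj a b := by
  simp only [expandVertex, SimpleGraph.fromRel_adj, ne_eq, Sum.inl.injEq]
  exact ⟨fun ⟨_, h⟩ => h.elim id .symm,
    fun h => ⟨fun hab => G.ne_of_adj h (congrArg Subtype.val hab), .inl h⟩⟩

lemma adj_inl_inr (a : {u : V // u ≠ v}) (i : Fin n) :
    (expandVertex G v n).Adj (.inl a) (.inr i) ↔ G.Adj a v := by
  simp [expandVertex]

lemma adj_inr_inr (i j : Fin n) :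
    (expandVertex G v n).Adj (.inr i : {u : V // u ≠ v} ⊕ Fin n) (.inr j) ↔ i ≠ j := by
  simp [expandVertex]

variable (v) in
def collapse : {u : V // u ≠ v} ⊕ Fin n → V := Sum.elim Subtype.val fun _ => v

@[simp] lemma collapse_inl (a : {u : V // u ≠ v}) : collapse v (.inl a : _ ⊕ Fin n) = a := rfl

@[simp] lemma collapse_inr (i : Fin n) : collapse v (.inr i : {u : V // u ≠ v} ⊕ _) = v := rfl

lemma adj_inl_iff (a : {u : V // u ≠ v}) (y : {u : V // u ≠ v} ⊕ Fin n) :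
    (expandVertex G v n).Adj (.inl a) y ↔ G.Adj a (collapse v y) := by
  rcases y with b | j
  · exact adj_inl_inl a b
  · exact adj_inl_inr a j

lemma adj_of_adj_collapse {x y : {u : V // u ≠ v} ⊕ Fin n}
    (h : G.Adj (collapse v x) (collapse v y)) : (expandVertex G v n).Adj x y := by
  rcases x with a | i <;> rcases y with b | j
  · exact (adj_inl_inl a b).2 h
  · exact (adj_inl_inr a j).2 h
  · exact ((adj_inl_inr b i).2 h.symm).symm
  · exact (G.irrefl h).elim

lemma adj_collapse_of_adj {x y : {u : V // u ≠ v} ⊕ Fin n} (h : (expandVertex G v n).Adj x y)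
    (hxy : collapse v x ≠ collapse v y) : G.Adj (collapse v x) (collapse v y) := by
  rcases x with a | i <;> rcases y with b | j
  · exact (adj_inl_inl a b).1 h
  · exact (adj_inl_inr a j).1 h
  · exact ((adj_inl_inr b i).1 h.symm).symm
  · exact absurd rfl hxy

lemma collapse_injOn {M : Finset ({u : V // u ≠ v} ⊕ Fin n)}
    (hM : IsIndepF (expandVertex G v n) M) : Set.InjOn (collapse (n := n) v) M := by
  rintro (a | i) hx (b | j) hy hxy
  · exact congrArg Sum.inl (Subtype.ext hxy)
  · exact absurd hxy a.2
  · exact absurd hxy.symm b.2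
  · by_contra hij
    exact hM _ hx _ hy ((adj_inr_inr i j).2 fun h => hij (congrArg Sum.inr h))

variable [DecidableEq V]

lemma isMaxIndepF_image_collapse (hn : 1 ≤ n)
    {M : Finset ({u : V // u ≠ v} ⊕ Fin n)} (hM : IsMaxIndepF (expandVertex G v n) M) :
    IsMaxIndepF G (M.image (collapse v)) := by
  refine ⟨?_, fun N hN hMN => Finset.Subset.antisymm (fun b hb => ?_) hMN⟩
  · simp only [IsIndepF, Finset.forall_mem_image]
    exact fun x hx y hy h => hM.1 x hx y hy (adj_of_adj_collapse h)
  have hcollapse : ∀ y ∈ M, collapse v y ∈ N := fun y hy => hMN (Finset.mem_image_of_mem _ hy)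
  suffices ∃ x, collapse v x = b ∧ ∀ y ∈ M, ¬ (expandVertex G v n).Adj x y by
    obtain ⟨x, rfl, hx⟩ := this
    exact Finset.mem_image_of_mem _ (IsMaxIndepF.mem_of_forall_not_adj hM hx)
  by_cases hbv : b = v
  · subst hbv
    by_cases hclique : ∃ j, (.inr j : {u : V // u ≠ b} ⊕ Fin n) ∈ M
    · obtain ⟨j, hj⟩ := hclique
      exact ⟨.inr j, rfl, fun y hy h => hM.1 _ hj _ hy h⟩
    refine ⟨.inr ⟨0, hn⟩, rfl, fun y hy h => ?_⟩
    rcases y with a | j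
    · exact hN _ hb _ (hcollapse _ hy) ((adj_inl_inr a _).1 h.symm).symm
    · exact hclique ⟨j, hy⟩
  · refine ⟨.inl ⟨b, hbv⟩, rfl, fun y hy h => ?_⟩
    exact hN _ hb _ (hcollapse _ hy) ((adj_inl_iff _ y).1 h)

variable (v) in
def embed (i : Fin n) (u : V) : {u : V // u ≠ v} ⊕ Fin n :=
  if h : u = v then .inr i else .inl ⟨u, h⟩

lemma embed_self (i : Fin n) : embed v i v = .inr i := dif_pos rfl

lemma embed_of_ne (i : Fin n) {u : V} (h : u ≠ v) : embed v i u = .inl ⟨u, h⟩ := dif_neg h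

lemma collapse_embed (i : Fin n) (u : V) : collapse v (embed v i u) = u := by
  by_cases h : u = v
  · rw [h, embed_self, collapse_inr]
  · rw [embed_of_ne i h, collapse_inl]

lemma embed_injective (i : Fin n) : Function.Injective (embed v i) :=
  (Function.LeftInverse.injective (collapse_embed i))

lemma embed_collapse_eq_or_adj (i : Fin n) (x : {u : V // u ≠ v} ⊕ Fin n) :
    embed v i (collapse v x) = x ∨ (expandVertex G v n).Adj x (embed v i (collapse v x)) := by
  rcases x with a | j
  · exact .inl (embed_of_ne i a.2)
  · rw [collapse_inr, embed_self, adj_inr_inr]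
    exact (eq_or_ne i j).imp (congrArg _) Ne.symm

lemma adj_embed_iff (i : Fin n) (u u' : V) :
    (expandVertex G v n).Adj (embed v i u) (embed v i u') ↔ G.Adj u u' := by
  refine ⟨fun h => ?_, fun h => adj_of_adj_collapse (by rwa [collapse_embed, collapse_embed])⟩
  have hne : u ≠ u' := fun huu' => h.ne (congrArg _ huu')
  simpa only [collapse_embed] using adj_collapse_of_adj h (by rwa [collapse_embed, collapse_embed])

lemma isMaxIndepF_image_embed {M : Finset V} (hM : IsMaxIndepF G M) (i : Fin n) :
    IsMaxIndepF (expandVertex G v n) (M.image (embed v i)) := by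
  refine ⟨?_, fun N hN hMN => Finset.Subset.antisymm (fun x hx => ?_) hMN⟩
  · simp only [IsIndepF, Finset.forall_mem_image]
    exact fun u hu u' hu' h => hM.1 u hu u' hu' ((adj_embed_iff i u u').1 h)
  have hembed : ∀ u ∈ M, embed v i u ∈ N := fun u hu => hMN (Finset.mem_image_of_mem _ hu)
  have hxM : collapse v x ∈ M := IsMaxIndepF.mem_of_forall_not_adj hM fun u hu h =>
    hN x hx _ (hembed u hu) (adj_of_adj_collapse (by rwa [collapse_embed]))
  rcases embed_collapse_eq_or_adj (G := G) i x with h | h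
  · exact h ▸ Finset.mem_image_of_mem _ hxM
  · exact absurd h (hN x hx _ (hembed _ hxM))

variable {F : Type*} [Field F]

lemma apply_inr_eq_of_mem_wcSpace [Finite V] {w : {u : V // u ≠ v} ⊕ Fin n → F}
    (hw : w ∈ wcSpace F (expandVertex G v n)) (i j : Fin n) : w (.inr i) = w (.inr j) := by
  obtain ⟨M, hM, hvM⟩ := exists_isMaxIndepF_superset (isIndepF_singleton (G := G) v)
  have hv : v ∈ M := hvM (Finset.mem_singleton_self v)
  have hsum (k : Fin n) : ∑ x ∈ M.image (embed v k), w x =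
      w (.inr k) + ∑ u ∈ M.erase v, w (embed v i u) := by
    rw [Finset.sum_image (embed_injective k).injOn, ← Finset.add_sum_erase _ _ hv, embed_self]
    refine congrArg _ (Finset.sum_congr rfl fun u hu => ?_)
    rw [embed_of_ne k (Finset.ne_of_mem_erase hu), embed_of_ne i (Finset.ne_of_mem_erase hu)]
  refine add_right_cancel ((hsum i).symm.trans ((hw _ _ ?_ ?_).trans (hsum j))) <;>
    exact isMaxIndepF_image_embed hM _

lemma apply_embed_collapse_of_mem_wcSpace [Finite V] {w : {u : V // u ≠ v} ⊕ Fin n → F}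
    (hw : w ∈ wcSpace F (expandVertex G v n)) (i : Fin n) (x : {u : V // u ≠ v} ⊕ Fin n) :
    w (embed v i (collapse v x)) = w x := by
  rcases x with a | j
  · rw [collapse_inl, embed_of_ne i a.2]
  · rw [collapse_inr, embed_self, apply_inr_eq_of_mem_wcSpace hw]

lemma comp_embed_mem_wcSpace {w : {u : V // u ≠ v} ⊕ Fin n → F}
    (hw : w ∈ wcSpace F (expandVertex G v n)) (i : Fin n) : w ∘ embed v i ∈ wcSpace F G :=
  comp_mem_wcSpace (fun _ hM => ⟨isMaxIndepF_image_embed hM i, (embed_injective i).injOn⟩) hw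

lemma comp_collapse_mem_wcSpace (hn : 1 ≤ n) {w : V → F} (hw : w ∈ wcSpace F G) :
    w ∘ collapse v ∈ wcSpace F (expandVertex G v n) :=
  comp_mem_wcSpace (fun _ hM => ⟨isMaxIndepF_image_collapse hn hM, collapse_injOn hM.1⟩) hw

variable (G v F) in
def wcSpaceEquiv [Finite V] (hn : 1 ≤ n) : wcSpace F (expandVertex G v n) ≃ₗ[F] wcSpace F G where
  toFun w := ⟨w.1 ∘ embed v ⟨0, hn⟩, comp_embed_mem_wcSpace w.2 _⟩
  map_add' _ _ := rfl
  map_smul' _ _ := rfl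
  invFun w := ⟨w.1 ∘ collapse v, comp_collapse_mem_wcSpace hn w.2⟩
  left_inv w := Subtype.ext (funext (apply_embed_collapse_of_mem_wcSpace w.2 _))
  right_inv w := Subtype.ext (funext fun u => congrArg w.1 (collapse_embed _ u))

end expandVertex

/-- Replacing a vertex `v` of `G` by a complete graph `Kₙ` (`n ≥ 1`) joined to `N_G(v)`
does not change the well-covered dimension. -/
theorem wcdim_expandVertex {V : Type*} [Fintype V] [DecidableEq V] (G : SimpleGraph V)
    (F : Type*) [Field F] (v : V) (n : ℕ) (hn : 1 ≤ n) :
    wcdim F (expandVertex G v n) = wcdim F G :=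
  (expandVertex.wcSpaceEquiv G v F hn).finrank_eq
end

section
/- Let G_7 be the graph on 7 vertices {v₁, v₂, v₃, v₄, u, w, z} with edges v₁u, uv₂, uw, v₂v₄, v₁v₃, v₃w, wv₄, v₁z, v₂z, v₃z, v₄z. Then wcdim(G_7, F) = 3 if char(F) = 2 and wcdim(G_7, F) = 2 if char(F) ≠ 2. -/
/-- The graph `G₇` on 7 vertices `v₁ v₂ v₃ v₄ u w z = 0 1 2 3 4 5 6` with edges
`v₁u, uv₂, uw, v₂v₄, v₁v₃, v₃w, wv₄, v₁z, v₂z, v₃z, v₄z`. -/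
def G7 : SimpleGraph (Fin 7) :=
  SimpleGraph.fromRel fun x y => (x, y) ∈
    ([(0, 4), (4, 1), (4, 5), (1, 3), (0, 2), (2, 5), (5, 3),
      (0, 6), (1, 6), (2, 6), (3, 6)] : List (Fin 7 × Fin 7))


instance : DecidableRel G7.Adj := fun a b =>
  inferInstanceAs (Decidable (a ≠ b ∧ _))
instance : DecidablePred (IsIndepF G7) := fun M => by unfold IsIndepF; infer_instance
instance : DecidablePred (IsMaxIndepF G7) := fun M => by unfold IsMaxIndepF; infer_instance

set_option maxHeartbeats 4000000 in
set_option maxRecDepth 10000 in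
lemma maxIndep_iff (M : Finset (Fin 7)) : IsMaxIndepF G7 M ↔
    (M = {0,3} ∨ M = {1,2} ∨ M = {4,6} ∨ M = {5,6} ∨ M = {0,1,5} ∨ M = {2,3,4}) := by
  revert M; decide

lemma mem_wcSpace_iff (F : Type*) [Field F] (w : Fin 7 → F) :
    w ∈ wcSpace F G7 ↔
      (w 0 + w 3 = w 1 + w 2 ∧ w 1 + w 2 = w 4 + w 6 ∧ w 4 + w 6 = w 5 + w 6 ∧
       w 5 + w 6 = w 0 + (w 1 + w 5) ∧ w 0 + (w 1 + w 5) = w 2 + (w 3 + w 4)) := by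
  constructor
  · intro h
    have s1 := h {0,3} {1,2} (by rw [maxIndep_iff]; tauto) (by rw [maxIndep_iff]; tauto)
    have s2 := h {1,2} {4,6} (by rw [maxIndep_iff]; tauto) (by rw [maxIndep_iff]; tauto)
    have s3 := h {4,6} {5,6} (by rw [maxIndep_iff]; tauto) (by rw [maxIndep_iff]; tauto)
    have s4 := h {5,6} {0,1,5} (by rw [maxIndep_iff]; tauto) (by rw [maxIndep_iff]; tauto)
    have s5 := h {0,1,5} {2,3,4} (by rw [maxIndep_iff]; tauto) (by rw [maxIndep_iff]; tauto)
    simp [Finset.sum_insert, Finset.sum_pair, Finset.mem_insert] at s1 s2 s3 s4 s5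
    exact ⟨by linear_combination s1, by linear_combination s2, by linear_combination s3,
      by linear_combination s4, by linear_combination s5⟩
  · rintro ⟨h1, h2, h3, h4, h5⟩ M N hM hN
    have key : ∀ M : Finset (Fin 7), IsMaxIndepF G7 M → ∑ v ∈ M, w v = w 0 + w 3 := by
      intro M hM
      rcases (maxIndep_iff M).1 hM with h | h | h | h | h | h <;> subst h <;>
        simp [Finset.sum_insert, Finset.sum_pair, Finset.mem_insert]
      · linear_combination -h1
      · linear_combination -h1-h2
      · linear_combination -h1-h2-h3
      · linear_combination -h1-h2-h3-h4
      · linear_combination -h1-h2-h3-h4-h5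
    rw [key M hM, key N hN]

set_option maxHeartbeats 1000000 in
/-- `wcdim(G₇, F) = 3` if `char F = 2` and `wcdim(G₇, F) = 2` otherwise. -/
theorem wcdim_G7 (F : Type*) [Field F] :
    (ringChar F = 2 → wcdim F G7 = 3) ∧ (ringChar F ≠ 2 → wcdim F G7 = 2) := by
  constructor
  · intro hc
    have h2F : (2:F) = 0 := by
      have := ringChar.charP F; rw [hc] at this
      exact_mod_cast (CharP.cast_eq_zero F 2)
    have e : (wcSpace F G7) ≃ₗ[F] (Fin 3 → F) :=
      { toFun := fun w => ![w.1 0, w.1 1, w.1 4]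
        map_add' := by intro x y; funext i; fin_cases i <;> rfl
        map_smul' := by intro c x; funext i; fin_cases i <;> rfl
        invFun := fun c => ⟨![c 0, c 1, c 0 + c 2, c 1 + c 2, c 2, c 2, c 0 + c 1], by
          rw [mem_wcSpace_iff]
          refine ⟨?_, ?_, ?_, ?_, ?_⟩
          · show c 0 + (c 1 + c 2) = c 1 + (c 0 + c 2); ring
          · show c 1 + (c 0 + c 2) = c 2 + (c 0 + c 1); ring
          · show c 2 + (c 0 + c 1) = c 2 + (c 0 + c 1); rfl
          · show c 2 + (c 0 + c 1) = c 0 + (c 1 + c 2); ring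
          · show c 0 + (c 1 + c 2) = (c 0 + c 2) + ((c 1 + c 2) + c 2)
            linear_combination (-(c 2)) * h2F⟩
        left_inv := by
          intro w
          obtain ⟨h1, h2, h3, h4, h5⟩ := (mem_wcSpace_iff F w.1).1 w.2
          have e2 : w.1 2 = w.1 0 + w.1 4 := by linear_combination h2+h4
          have e3 : w.1 3 = w.1 1 + w.1 4 := by linear_combination h1+h2+h4
          have e5 : w.1 5 = w.1 4 := by linear_combination -h3
          have e6 : w.1 6 = w.1 0 + w.1 1 := by linear_combination h4
          refine Subtype.ext ?_
          show ![w.1 0, w.1 1, w.1 0 + w.1 4, w.1 1 + w.1 4, w.1 4, w.1 4,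
            w.1 0 + w.1 1] = w.1
          funext i
          fin_cases i
          · rfl
          · rfl
          · show w.1 0 + w.1 4 = w.1 2; linear_combination -e2
          · show w.1 1 + w.1 4 = w.1 3; linear_combination -e3
          · rfl
          · show w.1 4 = w.1 5; linear_combination -e5
          · show w.1 0 + w.1 1 = w.1 6; linear_combination -e6
        right_inv := by intro c; funext i; fin_cases i <;> rfl }
    show Module.finrank F (wcSpace F G7) = 3
    rw [LinearEquiv.finrank_eq e, Module.finrank_fin_fun]
  · intro hc
    have h2ne : (2:F) ≠ 0 := Ring.two_ne_zero hc
    have e : (wcSpace F G7) ≃ₗ[F] (Fin 2 → F) :=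
      { toFun := fun w => ![w.1 0, w.1 1]
        map_add' := by intro x y; funext i; fin_cases i <;> rfl
        map_smul' := by intro c x; funext i; fin_cases i <;> rfl
        invFun := fun c => ⟨![c 0, c 1, c 0, c 1, 0, 0, c 0 + c 1], by
          rw [mem_wcSpace_iff]
          refine ⟨?_, ?_, ?_, ?_, ?_⟩
          · show c 0 + c 1 = c 1 + c 0; ring
          · show c 1 + c 0 = 0 + (c 0 + c 1); ring
          · show (0:F) + (c 0 + c 1) = 0 + (c 0 + c 1); rfl
          · show (0:F) + (c 0 + c 1) = c 0 + (c 1 + 0); ring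
          · show c 0 + (c 1 + 0) = c 0 + (c 1 + 0); rfl⟩
        left_inv := by
          intro w
          obtain ⟨h1, h2, h3, h4, h5⟩ := (mem_wcSpace_iff F w.1).1 w.2
          have e2 : w.1 2 = w.1 0 + w.1 4 := by linear_combination h2+h4
          have e3 : w.1 3 = w.1 1 + w.1 4 := by linear_combination h1+h2+h4
          have e5 : w.1 5 = w.1 4 := by linear_combination -h3
          have e6 : w.1 6 = w.1 0 + w.1 1 := by linear_combination h4
          have h2w4 : 2 * w.1 4 = 0 := by linear_combination -h5 - e2 - e3 + e5
          have hw4 : w.1 4 = 0 := by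
            rcases mul_eq_zero.mp h2w4 with h | h
            · exact absurd h h2ne
            · exact h
          refine Subtype.ext ?_
          show ![w.1 0, w.1 1, w.1 0, w.1 1, 0, 0, w.1 0 + w.1 1] = w.1
          funext i
          fin_cases i
          · rfl
          · rfl
          · show w.1 0 = w.1 2; linear_combination -e2 - hw4
          · show w.1 1 = w.1 3; linear_combination -e3 - hw4
          · show (0:F) = w.1 4; linear_combination -hw4
          · show (0:F) = w.1 5; linear_combination -e5 - hw4
          · show w.1 0 + w.1 1 = w.1 6; linear_combination -e6
        right_inv := by intro c; funext i; fin_cases i <;> rfl }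
    show Module.finrank F (wcSpace F G7) = 2
    rw [LinearEquiv.finrank_eq e, Module.finrank_fin_fun]
end

section
/- For n ≥ 2, let Gₙ be the graph with vertex set {y₁,...,yₙ, v₁, v₂, w₁, w₂, u₁,...,uₙ}, where {y₁,...,yₙ, v₁, v₂} induces a complete graph K_{n+2}, {w₁, w₂, u₁,...,uₙ} induces the complete bipartite graph K_{2,n} with parts {w₁,w₂} and {u₁,...,uₙ}, plus the edges v₁w₁, v₂w₂, and y_i u_j for all i ≠ j in {1,...,n}. Then the maximal independent sets of Gₙ are exactly: {y_i, w₁, w₂} for 1 ≤ i ≤ n, {y_i, u_i} for 1 ≤ i ≤ n, {v₁, w₂}, {v₂, w₁}, {v₁, u₁,...,uₙ}, and {v₂, u₁,...,uₙ}. In particular Gₙ has exactly 2n + 4 maximal independent sets. -/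
/-- The vertices `y i`, `u i`, `v₁ v₂ w₁ w₂ = 0 1 2 3` of the graph `Gₙ`. -/
abbrev GnV (n : ℕ) := Fin n ⊕ Fin n ⊕ Fin 4

/-- The graph `Gₙ`: `{y₁,…,yₙ, v₁, v₂}` induces `K_{n+2}`, `{w₁, w₂, u₁,…,uₙ}` induces
`K_{2,n}` with parts `{w₁, w₂}` and `{u₁,…,uₙ}`, plus the edges `v₁w₁`, `v₂w₂`, and
`yᵢuⱼ` for all `i ≠ j`. -/
def Gn (n : ℕ) : SimpleGraph (GnV n) :=
  SimpleGraph.fromRel fun x y =>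
    match x, y with
    | Sum.inl _, Sum.inl _ => True
    | Sum.inl i, Sum.inr (Sum.inl j) => i ≠ j
    | Sum.inl _, Sum.inr (Sum.inr k) => k = 0 ∨ k = 1
    | Sum.inr (Sum.inl _), Sum.inr (Sum.inr k) => k = 2 ∨ k = 3
    | Sum.inr (Sum.inr a), Sum.inr (Sum.inr b) =>
        (a, b) ∈ ([(0, 1), (0, 2), (1, 3)] : List (Fin 4 × Fin 4))
    | _, _ => False


section helpers
variable {n : ℕ}

lemma adj_yy {i j : Fin n} : (Gn n).Adj (Sum.inl i) (Sum.inl j) ↔ i ≠ j := by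
  simp [Gn, SimpleGraph.fromRel_adj]
lemma adj_yu {i j : Fin n} : (Gn n).Adj (Sum.inl i) (Sum.inr (Sum.inl j)) ↔ i ≠ j := by
  simp [Gn, SimpleGraph.fromRel_adj]
lemma adj_uy {i j : Fin n} : (Gn n).Adj (Sum.inr (Sum.inl i)) (Sum.inl j) ↔ i ≠ j := by
  simp [Gn, SimpleGraph.fromRel_adj, eq_comm]
lemma adj_yk {i : Fin n} {k : Fin 4} : (Gn n).Adj (Sum.inl i) (Sum.inr (Sum.inr k)) ↔ k = 0 ∨ k = 1 := by
  simp [Gn, SimpleGraph.fromRel_adj]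
lemma adj_ky {i : Fin n} {k : Fin 4} : (Gn n).Adj (Sum.inr (Sum.inr k)) (Sum.inl i) ↔ k = 0 ∨ k = 1 := by
  simp [Gn, SimpleGraph.fromRel_adj]
lemma adj_uu {i j : Fin n} : ¬ (Gn n).Adj (Sum.inr (Sum.inl i)) (Sum.inr (Sum.inl j)) := by
  simp [Gn, SimpleGraph.fromRel_adj]
lemma adj_uk {i : Fin n} {k : Fin 4} : (Gn n).Adj (Sum.inr (Sum.inl i)) (Sum.inr (Sum.inr k)) ↔ k = 2 ∨ k = 3 := by
  simp [Gn, SimpleGraph.fromRel_adj]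
lemma adj_ku {i : Fin n} {k : Fin 4} : (Gn n).Adj (Sum.inr (Sum.inr k)) (Sum.inr (Sum.inl i)) ↔ k = 2 ∨ k = 3 := by
  simp [Gn, SimpleGraph.fromRel_adj]
lemma adj_kk {a b : Fin 4} : (Gn n).Adj (Sum.inr (Sum.inr a) : GnV n) (Sum.inr (Sum.inr b)) ↔
    ((a,b) ∈ ([(0,1),(0,2),(1,3),(1,0),(2,0),(3,1)] : List (Fin 4 × Fin 4))) := by
  simp only [Gn, SimpleGraph.fromRel_adj]
  fin_cases a <;> fin_cases b <;> simp_all <;> decide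

lemma mem_max {V : Type*} [DecidableEq V] {G : SimpleGraph V} {S : Finset V} (h : IsMaxIndepF G S) {x : V}
    (hx : ∀ v ∈ S, ¬ G.Adj x v) : x ∈ S := by
  have hind : IsIndepF G (insert x S) := by
    intro a ha b hb hadj
    rcases Finset.mem_insert.1 ha with rfl | ha'
    · rcases Finset.mem_insert.1 hb with rfl | hb'
      · exact G.irrefl hadj
      · exact hx _ hb' hadj
    · rcases Finset.mem_insert.1 hb with rfl | hb'
      · exact hx _ ha' hadj.symm
      · exact h.1 _ ha' _ hb' hadj
  have := h.2 _ hind (Finset.subset_insert _ _)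
  rw [← this]; exact Finset.mem_insert_self _ _

lemma maxIndep_of {V : Type*} {G : SimpleGraph V} {T : Finset V} (hind : IsIndepF G T)
    (hdom : ∀ x, (∀ v ∈ T, ¬ G.Adj x v) → x ∈ T) : IsMaxIndepF G T := by
  refine ⟨hind, fun M' hM' hsub => ?_⟩
  refine Finset.Subset.antisymm (fun x hx => ?_) hsub
  exact hdom x (fun v hv hadj => hM' x hx v (hsub hv) hadj)

lemma back₁ (i : Fin n) : IsMaxIndepF (Gn n)
    {Sum.inl i, Sum.inr (Sum.inr 2), Sum.inr (Sum.inr 3)} := by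
  apply maxIndep_of
  · intro v hv w hw
    simp only [Finset.mem_insert, Finset.mem_singleton] at hv hw
    rcases hv with rfl|rfl|rfl <;> rcases hw with rfl|rfl|rfl <;>
      simp [adj_yy, adj_yk, adj_ky, adj_kk]
  · intro x hx
    rcases x with j | j | k
    · have := hx (Sum.inl i) (by simp)
      rw [adj_yy] at this
      simp_all
    · have := hx (Sum.inr (Sum.inr 2)) (by simp)
      rw [adj_uk] at this
      simp at this
    · have h0 := hx (Sum.inl i) (by simp)
      rw [adj_ky] at h0
      fin_cases k <;> simp_all

lemma back₂ (i : Fin n) : IsMaxIndepF (Gn n) {Sum.inl i, Sum.inr (Sum.inl i)} := by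
  apply maxIndep_of
  · intro v hv w hw
    simp only [Finset.mem_insert, Finset.mem_singleton] at hv hw
    rcases hv with rfl|rfl <;> rcases hw with rfl|rfl <;>
      simp [adj_yy, adj_yu, adj_uy, adj_uu]
  · intro x hx
    rcases x with j | j | k
    · have := hx (Sum.inl i) (by simp); rw [adj_yy] at this; simp_all
    · have := hx (Sum.inl i) (by simp); rw [adj_uy] at this; simp_all
    · have h0 := hx (Sum.inl i) (by simp); rw [adj_ky] at h0
      have h1 := hx (Sum.inr (Sum.inl i)) (by simp); rw [adj_ku] at h1
      fin_cases k <;> simp_all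

lemma back₃ : IsMaxIndepF (Gn n) {Sum.inr (Sum.inr 0), Sum.inr (Sum.inr 3)} := by
  apply maxIndep_of
  · intro v hv w hw
    simp only [Finset.mem_insert, Finset.mem_singleton] at hv hw
    rcases hv with rfl|rfl <;> rcases hw with rfl|rfl <;> simp [adj_kk]
  · intro x hx
    rcases x with j | j | k
    · have := hx (Sum.inr (Sum.inr 0)) (by simp); rw [adj_yk] at this; simp_all
    · have := hx (Sum.inr (Sum.inr 3)) (by simp); rw [adj_uk] at this; simp_all
    · have h0 := hx (Sum.inr (Sum.inr 0)) (by simp); rw [adj_kk] at h0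
      have h3 := hx (Sum.inr (Sum.inr 3)) (by simp); rw [adj_kk] at h3
      fin_cases k <;> simp_all

lemma back₄ : IsMaxIndepF (Gn n) {Sum.inr (Sum.inr 1), Sum.inr (Sum.inr 2)} := by
  apply maxIndep_of
  · intro v hv w hw
    simp only [Finset.mem_insert, Finset.mem_singleton] at hv hw
    rcases hv with rfl|rfl <;> rcases hw with rfl|rfl <;> simp [adj_kk]
  · intro x hx
    rcases x with j | j | k
    · have := hx (Sum.inr (Sum.inr 1)) (by simp); rw [adj_yk] at this; simp_all
    · have := hx (Sum.inr (Sum.inr 2)) (by simp); rw [adj_uk] at this; simp_all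
    · have h1 := hx (Sum.inr (Sum.inr 1)) (by simp); rw [adj_kk] at h1
      have h2 := hx (Sum.inr (Sum.inr 2)) (by simp); rw [adj_kk] at h2
      fin_cases k <;> simp_all

lemma back₅ (hn : 0 < n) : IsMaxIndepF (Gn n)
    (insert (Sum.inr (Sum.inr 0)) (Finset.univ.image fun i : Fin n => Sum.inr (Sum.inl i))) := by
  apply maxIndep_of
  · intro v hv w hw
    simp only [Finset.mem_insert, Finset.mem_image, Finset.mem_univ, true_and] at hv hw
    rcases hv with rfl|⟨i, rfl⟩ <;> rcases hw with rfl|⟨j, rfl⟩ <;>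
      simp [adj_kk, adj_ku, adj_uk, adj_uu]
  · intro x hx
    rcases x with j | j | k
    · have := hx (Sum.inr (Sum.inr 0)) (by simp); rw [adj_yk] at this; simp_all
    · simp
    · have h0 := hx (Sum.inr (Sum.inr 0)) (by simp); rw [adj_kk] at h0
      have h3 := hx (Sum.inr (Sum.inl ⟨0, hn⟩)) (by simp); rw [adj_ku] at h3
      fin_cases k <;> simp_all

lemma back₆ (hn : 0 < n) : IsMaxIndepF (Gn n)
    (insert (Sum.inr (Sum.inr 1)) (Finset.univ.image fun i : Fin n => Sum.inr (Sum.inl i))) := by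
  apply maxIndep_of
  · intro v hv w hw
    simp only [Finset.mem_insert, Finset.mem_image, Finset.mem_univ, true_and] at hv hw
    rcases hv with rfl|⟨i, rfl⟩ <;> rcases hw with rfl|⟨j, rfl⟩ <;>
      simp [adj_kk, adj_ku, adj_uk, adj_uu]
  · intro x hx
    rcases x with j | j | k
    · have := hx (Sum.inr (Sum.inr 1)) (by simp); rw [adj_yk] at this; simp_all
    · simp
    · have h1 := hx (Sum.inr (Sum.inr 1)) (by simp); rw [adj_kk] at h1
      have h2 := hx (Sum.inr (Sum.inl ⟨0, hn⟩)) (by simp); rw [adj_ku] at h2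
      fin_cases k <;> simp_all
end helpers

lemma classify (n : ℕ) (hn : 2 ≤ n) (S : Finset (GnV n)) (h : IsMaxIndepF (Gn n) S) :
    ((∃ i : Fin n, S = {Sum.inl i, Sum.inr (Sum.inr 2), Sum.inr (Sum.inr 3)}) ∨
     (∃ i : Fin n, S = {Sum.inl i, Sum.inr (Sum.inl i)}) ∨
     S = {Sum.inr (Sum.inr 0), Sum.inr (Sum.inr 3)} ∨
     S = {Sum.inr (Sum.inr 1), Sum.inr (Sum.inr 2)} ∨
     S = insert (Sum.inr (Sum.inr 0)) (Finset.univ.image fun i : Fin n => Sum.inr (Sum.inl i)) ∨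
     S = insert (Sum.inr (Sum.inr 1)) (Finset.univ.image fun i : Fin n => Sum.inr (Sum.inl i))) := by
  by_cases hy : ∃ i : Fin n, Sum.inl i ∈ S
  · obtain ⟨i, hi⟩ := hy
    by_cases hu : Sum.inr (Sum.inl i) ∈ S
    · refine Or.inr (Or.inl ⟨i, ?_⟩)
      ext x
      simp only [Finset.mem_insert, Finset.mem_singleton]
      constructor
      · intro hx
        rcases x with j | j | k
        · have := h.1 _ hx _ hi; rw [adj_yy, not_ne_iff] at this
          exact Or.inl (by rw [this])
        · have := h.1 _ hx _ hi; rw [adj_uy, not_ne_iff] at this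
          exact Or.inr (by rw [this])
        · exfalso
          have h1 := h.1 _ hx _ hi; rw [adj_ky] at h1
          have h2 := h.1 _ hx _ hu; rw [adj_ku] at h2
          fin_cases k <;> simp_all
      · rintro (rfl | rfl); exacts [hi, hu]
    · have hw2 : Sum.inr (Sum.inr 2) ∈ S := by
        apply mem_max h
        intro v hv
        rcases v with j | j | k
        · rw [adj_ky]; decide
        · exfalso
          have := h.1 _ hv _ hi; rw [adj_uy, not_ne_iff] at this
          exact hu (this ▸ hv)
        · have hk0 : k ≠ 0 := by
            rintro rfl; exact h.1 _ hv _ hi (adj_ky.mpr (Or.inl rfl))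
          rw [adj_kk]; fin_cases k <;> simp_all
      have hw3 : Sum.inr (Sum.inr 3) ∈ S := by
        apply mem_max h
        intro v hv
        rcases v with j | j | k
        · rw [adj_ky]; decide
        · exfalso
          have := h.1 _ hv _ hi; rw [adj_uy, not_ne_iff] at this
          exact hu (this ▸ hv)
        · have hk1 : k ≠ 1 := by
            rintro rfl; exact h.1 _ hv _ hi (adj_ky.mpr (Or.inr rfl))
          rw [adj_kk]; fin_cases k <;> simp_all
      refine Or.inl ⟨i, ?_⟩
      ext x
      simp only [Finset.mem_insert, Finset.mem_singleton]
      constructor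
      · intro hx
        rcases x with j | j | k
        · have := h.1 _ hx _ hi; rw [adj_yy, not_ne_iff] at this
          exact Or.inl (by rw [this])
        · exfalso
          have := h.1 _ hx _ hi; rw [adj_uy, not_ne_iff] at this
          exact hu (this ▸ hx)
        · have h1 := h.1 _ hx _ hi; rw [adj_ky] at h1
          right; fin_cases k <;> simp_all
      · rintro (rfl | rfl | rfl); exacts [hi, hw2, hw3]
  · push_neg at hy
    by_cases hv1 : Sum.inr (Sum.inr 0) ∈ S
    · by_cases hw2 : Sum.inr (Sum.inr 3) ∈ S
      · refine Or.inr (Or.inr (Or.inl ?_))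
        ext x
        simp only [Finset.mem_insert, Finset.mem_singleton]
        constructor
        · intro hx
          rcases x with j | j | k
          · exact absurd hx (hy j)
          · exact absurd (adj_uk.mpr (Or.inr rfl)) (h.1 _ hx _ hw2)
          · have h0 := h.1 _ hx _ hv1; rw [adj_kk] at h0
            have h3 := h.1 _ hx _ hw2; rw [adj_kk] at h3
            fin_cases k <;> simp_all
        · rintro (rfl | rfl); exacts [hv1, hw2]
      · have hall : ∀ j : Fin n, Sum.inr (Sum.inl j) ∈ S := by
          intro j
          apply mem_max h
          intro v hv
          rcases v with i | i | k
          · exact absurd hv (hy i)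
          · exact adj_uu
          · rw [adj_uk]
            rintro (rfl | rfl)
            · exact h.1 _ hv _ hv1 (adj_kk.mpr (by simp))
            · exact hw2 hv
        refine Or.inr (Or.inr (Or.inr (Or.inr (Or.inl ?_))))
        ext x
        simp only [Finset.mem_insert, Finset.mem_image, Finset.mem_univ, true_and]
        constructor
        · intro hx
          rcases x with j | j | k
          · exact absurd hx (hy j)
          · exact Or.inr ⟨j, rfl⟩
          · left
            have h0 := h.1 _ hx _ hv1; rw [adj_kk] at h0
            have h3 := h.1 _ hx _ (hall ⟨0, by omega⟩); rw [adj_ku] at h3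
            fin_cases k <;> simp_all
        · rintro (rfl | ⟨j, rfl⟩); exacts [hv1, hall j]
    · by_cases hv2 : Sum.inr (Sum.inr 1) ∈ S
      · by_cases hw1 : Sum.inr (Sum.inr 2) ∈ S
        · refine Or.inr (Or.inr (Or.inr (Or.inl ?_)))
          ext x
          simp only [Finset.mem_insert, Finset.mem_singleton]
          constructor
          · intro hx
            rcases x with j | j | k
            · exact absurd hx (hy j)
            · exact absurd (adj_uk.mpr (Or.inl rfl)) (h.1 _ hx _ hw1)
            · have h1 := h.1 _ hx _ hv2; rw [adj_kk] at h1
              have h2 := h.1 _ hx _ hw1; rw [adj_kk] at h2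
              fin_cases k <;> simp_all
          · rintro (rfl | rfl); exacts [hv2, hw1]
        · have hall : ∀ j : Fin n, Sum.inr (Sum.inl j) ∈ S := by
            intro j
            apply mem_max h
            intro v hv
            rcases v with i | i | k
            · exact absurd hv (hy i)
            · exact adj_uu
            · rw [adj_uk]
              rintro (rfl | rfl)
              · exact hw1 hv
              · exact h.1 _ hv _ hv2 (adj_kk.mpr (by simp))
          refine Or.inr (Or.inr (Or.inr (Or.inr (Or.inr ?_))))
          ext x
          simp only [Finset.mem_insert, Finset.mem_image, Finset.mem_univ, true_and]
          constructor
          · intro hx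
            rcases x with j | j | k
            · exact absurd hx (hy j)
            · exact Or.inr ⟨j, rfl⟩
            · left
              have h1 := h.1 _ hx _ hv2; rw [adj_kk] at h1
              have h2 := h.1 _ hx _ (hall ⟨0, by omega⟩); rw [adj_ku] at h2
              fin_cases k <;> simp_all
          · rintro (rfl | ⟨j, rfl⟩); exacts [hv2, hall j]
      · exfalso
        by_cases hu : ∃ j : Fin n, Sum.inr (Sum.inl j) ∈ S
        · obtain ⟨j, hj⟩ := hu
          apply hv1
          apply mem_max h
          intro v hv
          rcases v with i | i | k
          · exact absurd hv (hy i)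
          · rw [adj_ku]; decide
          · rw [adj_kk]
            intro hm
            simp at hm
            rcases hm with rfl | rfl
            · exact hv2 hv
            · exact h.1 _ hv _ hj (adj_ku.mpr (Or.inl rfl))
        · push_neg at hu
          apply hy ⟨0, by omega⟩
          apply mem_max h
          intro v hv
          rcases v with i | i | k
          · exact absurd hv (hy i)
          · exact absurd hv (hu i)
          · rw [adj_yk]
            rintro (rfl | rfl); exacts [hv1 hv, hv2 hv]

/-- The maximal independent sets of `Gₙ` (`n ≥ 2`) are exactly `{yᵢ, w₁, w₂}` and
`{yᵢ, uᵢ}` for `1 ≤ i ≤ n`, `{v₁, w₂}`, `{v₂, w₁}`, `{v₁, u₁,…,uₙ}` and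
`{v₂, u₁,…,uₙ}`; in particular there are exactly `2n + 4` of them. -/
theorem maxIndep_Gn (n : ℕ) (hn : 2 ≤ n) :
    (∀ S : Finset (GnV n), IsMaxIndepF (Gn n) S ↔
      ((∃ i : Fin n, S = {Sum.inl i, Sum.inr (Sum.inr 2), Sum.inr (Sum.inr 3)}) ∨
       (∃ i : Fin n, S = {Sum.inl i, Sum.inr (Sum.inl i)}) ∨
       S = {Sum.inr (Sum.inr 0), Sum.inr (Sum.inr 3)} ∨
       S = {Sum.inr (Sum.inr 1), Sum.inr (Sum.inr 2)} ∨
       S = insert (Sum.inr (Sum.inr 0))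
             (Finset.univ.image fun i : Fin n => Sum.inr (Sum.inl i)) ∨
       S = insert (Sum.inr (Sum.inr 1))
             (Finset.univ.image fun i : Fin n => Sum.inr (Sum.inl i)))) ∧
    {S : Finset (GnV n) | IsMaxIndepF (Gn n) S}.ncard = 2 * n + 4 := by
  have hn0 : 0 < n := by omega
  have key : ∀ S : Finset (GnV n), IsMaxIndepF (Gn n) S ↔
      ((∃ i : Fin n, S = {Sum.inl i, Sum.inr (Sum.inr 2), Sum.inr (Sum.inr 3)}) ∨
       (∃ i : Fin n, S = {Sum.inl i, Sum.inr (Sum.inl i)}) ∨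
       S = {Sum.inr (Sum.inr 0), Sum.inr (Sum.inr 3)} ∨
       S = {Sum.inr (Sum.inr 1), Sum.inr (Sum.inr 2)} ∨
       S = insert (Sum.inr (Sum.inr 0))
             (Finset.univ.image fun i : Fin n => Sum.inr (Sum.inl i)) ∨
       S = insert (Sum.inr (Sum.inr 1))
             (Finset.univ.image fun i : Fin n => Sum.inr (Sum.inl i))) := by
    intro S
    constructor
    · exact classify n hn S
    · rintro (⟨i, rfl⟩ | ⟨i, rfl⟩ | rfl | rfl | rfl | rfl)
      exacts [back₁ i, back₂ i, back₃, back₄, back₅ hn0, back₆ hn0]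
  refine ⟨key, ?_⟩
  set f₁ : Fin n → Finset (GnV n) :=
    fun i => {Sum.inl i, Sum.inr (Sum.inr 2), Sum.inr (Sum.inr 3)} with hf₁
  set f₂ : Fin n → Finset (GnV n) := fun i => {Sum.inl i, Sum.inr (Sum.inl i)} with hf₂
  set T3 : Finset (GnV n) := {Sum.inr (Sum.inr 0), Sum.inr (Sum.inr 3)} with hT3
  set T4 : Finset (GnV n) := {Sum.inr (Sum.inr 1), Sum.inr (Sum.inr 2)} with hT4
  set T5 : Finset (GnV n) := insert (Sum.inr (Sum.inr 0))
    (Finset.univ.image fun i : Fin n => Sum.inr (Sum.inl i)) with hT5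
  set T6 : Finset (GnV n) := insert (Sum.inr (Sum.inr 1))
    (Finset.univ.image fun i : Fin n => Sum.inr (Sum.inl i)) with hT6
  set A : Finset (Finset (GnV n)) := Finset.univ.image f₁ with hA
  set B : Finset (Finset (GnV n)) := Finset.univ.image f₂ with hB
  set C : Finset (Finset (GnV n)) := {T3, T4, T5, T6} with hC
  have hset : {S : Finset (GnV n) | IsMaxIndepF (Gn n) S} = ↑((A ∪ B) ∪ C) := by
    ext S
    simp only [Set.mem_setOf_eq, key S, Finset.coe_union, Set.mem_union, Finset.mem_coe,
      Finset.mem_union, hA, hB, hC, Finset.mem_image, Finset.mem_univ, true_and,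
      Finset.mem_insert, Finset.mem_singleton]
    constructor
    · rintro (⟨i, rfl⟩ | ⟨i, rfl⟩ | rfl | rfl | rfl | rfl)
      · exact Or.inl (Or.inl ⟨i, rfl⟩)
      · exact Or.inl (Or.inr ⟨i, rfl⟩)
      · exact Or.inr (Or.inl rfl)
      · exact Or.inr (Or.inr (Or.inl rfl))
      · exact Or.inr (Or.inr (Or.inr (Or.inl rfl)))
      · exact Or.inr (Or.inr (Or.inr (Or.inr rfl)))
    · rintro ((⟨i, rfl⟩ | ⟨i, rfl⟩) | (rfl | rfl | rfl | rfl))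
      · exact Or.inl ⟨i, rfl⟩
      · exact Or.inr (Or.inl ⟨i, rfl⟩)
      · exact Or.inr (Or.inr (Or.inl rfl))
      · exact Or.inr (Or.inr (Or.inr (Or.inl rfl)))
      · exact Or.inr (Or.inr (Or.inr (Or.inr (Or.inl rfl))))
      · exact Or.inr (Or.inr (Or.inr (Or.inr (Or.inr rfl))))
  rw [hset, Set.ncard_coe_finset]
  have hcardA : A.card = n := by
    rw [hA, Finset.card_image_of_injective _ ?_, Finset.card_univ, Fintype.card_fin]
    intro i j hij
    have : (Sum.inl i : GnV n) ∈ f₁ j := hij ▸ Finset.mem_insert_self _ _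
    simpa [hf₁] using this
  have hcardB : B.card = n := by
    rw [hB, Finset.card_image_of_injective _ ?_, Finset.card_univ, Fintype.card_fin]
    intro i j hij
    have : (Sum.inl i : GnV n) ∈ f₂ j := hij ▸ Finset.mem_insert_self _ _
    simpa [hf₂] using this
  have hne34 : T3 ≠ T4 := by
    intro hEq
    have : (Sum.inr (Sum.inr 0) : GnV n) ∈ T4 := hEq ▸ (by simp [hT3])
    simp [hT4] at this
  have hne35 : T3 ≠ T5 := by
    intro hEq
    have : (Sum.inr (Sum.inr 3) : GnV n) ∈ T5 := hEq ▸ (by simp [hT3])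
    simp [hT5] at this
  have hne36 : T3 ≠ T6 := by
    intro hEq
    have : (Sum.inr (Sum.inr 3) : GnV n) ∈ T6 := hEq ▸ (by simp [hT3])
    simp [hT6] at this
  have hne45 : T4 ≠ T5 := by
    intro hEq
    have : (Sum.inr (Sum.inr 2) : GnV n) ∈ T5 := hEq ▸ (by simp [hT4])
    simp [hT5] at this
  have hne46 : T4 ≠ T6 := by
    intro hEq
    have : (Sum.inr (Sum.inr 2) : GnV n) ∈ T6 := hEq ▸ (by simp [hT4])
    simp [hT6] at this
  have hne56 : T5 ≠ T6 := by
    intro hEq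
    have : (Sum.inr (Sum.inr 0) : GnV n) ∈ T6 := hEq ▸ (by simp [hT5])
    simp [hT6] at this
  have hcardC : C.card = 4 := by
    rw [hC]
    rw [Finset.card_insert_of_notMem (by simp [hne34, hne35, hne36]),
        Finset.card_insert_of_notMem (by simp [hne45, hne46]),
        Finset.card_insert_of_notMem (by simp [hne56]),
        Finset.card_singleton]
  have hdisjAB : Disjoint A B := by
    rw [Finset.disjoint_left]
    intro S hS hS'
    rw [hA, Finset.mem_image] at hS
    rw [hB, Finset.mem_image] at hS'
    obtain ⟨i, -, rfl⟩ := hS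
    obtain ⟨j, -, hj⟩ := hS'
    have h3 : (Sum.inr (Sum.inr 3) : GnV n) ∈ f₂ j := by rw [hj]; simp [hf₁]
    simp [hf₂] at h3
  have hdisjC : Disjoint (A ∪ B) C := by
    rw [Finset.disjoint_left]
    intro S hS hSC
    have hyin : ∃ i : Fin n, (Sum.inl i : GnV n) ∈ S := by
      rw [Finset.mem_union] at hS
      rcases hS with hS | hS
      · rw [hA, Finset.mem_image] at hS
        obtain ⟨i, -, rfl⟩ := hS
        exact ⟨i, by simp [hf₁]⟩
      · rw [hB, Finset.mem_image] at hS
        obtain ⟨i, -, rfl⟩ := hS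
        exact ⟨i, by simp [hf₂]⟩
    obtain ⟨i, hi⟩ := hyin
    rw [hC] at hSC
    simp only [Finset.mem_insert, Finset.mem_singleton] at hSC
    rcases hSC with rfl | rfl | rfl | rfl
    · simp [hT3] at hi
    · simp [hT4] at hi
    · simp [hT5] at hi
    · simp [hT6] at hi
  rw [Finset.card_union_of_disjoint hdisjC, Finset.card_union_of_disjoint hdisjAB,
    hcardA, hcardB, hcardC]
  omega
end

section
/- For every n ≥ 2 there exists a graph Gₙ on 2n + 4 vertices such that for every field F: wcdim(Gₙ, F) = 2 if char(F) divides 2n − 1, and wcdim(Gₙ, F) = 1 if char(F) does not divide 2n − 1. Concretely, Gₙ has vertices {y₁,...,yₙ, v₁, v₂, w₁, w₂, u₁,...,uₙ}, where {y₁,...,yₙ, v₁, v₂} induces K_{n+2}, {w₁, w₂, u₁,...,uₙ} induces K_{2,n} with parts {w₁,w₂} and {u₁,...,uₙ}, plus the edges v₁w₁, v₂w₂, and y_i u_j for all i ≠ j in {1,...,n}. -/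
namespace WCAux

variable {n : ℕ}

abbrev Y (i : Fin n) : GnV n := Sum.inl i
abbrev U (i : Fin n) : GnV n := Sum.inr (Sum.inl i)
abbrev V1 : GnV n := Sum.inr (Sum.inr 0)
abbrev V2 : GnV n := Sum.inr (Sum.inr 1)
abbrev W1 : GnV n := Sum.inr (Sum.inr 2)
abbrev W2 : GnV n := Sum.inr (Sum.inr 3)

def Us (n : ℕ) : Finset (GnV n) := Finset.univ.image U

lemma mem_Us {x : GnV n} : x ∈ Us n ↔ ∃ j, x = U j := by
  simp [Us, eq_comm]

lemma indepA (i : Fin n) : IsIndepF (Gn n) {Y i, U i} := by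
  intro v hv w hw
  simp only [Finset.mem_insert, Finset.mem_singleton] at hv hw
  rcases hv with rfl | rfl <;> rcases hw with rfl | rfl <;>
    simp [Gn, SimpleGraph.fromRel_adj]

lemma indepB (i : Fin n) : IsIndepF (Gn n) {Y i, W1, W2} := by
  intro v hv w hw
  simp only [Finset.mem_insert, Finset.mem_singleton] at hv hw
  rcases hv with rfl | rfl | rfl <;> rcases hw with rfl | rfl | rfl <;>
    simp [Gn, SimpleGraph.fromRel_adj]

lemma indepC1 : IsIndepF (Gn n) (insert V1 (Us n)) := by
  intro v hv w hw
  simp only [Finset.mem_insert, mem_Us] at hv hw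
  rcases hv with rfl | ⟨j, rfl⟩ <;> rcases hw with rfl | ⟨k, rfl⟩ <;>
    simp [Gn, SimpleGraph.fromRel_adj]

lemma indepC2 : IsIndepF (Gn n) (insert V2 (Us n)) := by
  intro v hv w hw
  simp only [Finset.mem_insert, mem_Us] at hv hw
  rcases hv with rfl | ⟨j, rfl⟩ <;> rcases hw with rfl | ⟨k, rfl⟩ <;>
    simp [Gn, SimpleGraph.fromRel_adj]

lemma indepD1 : IsIndepF (Gn n) {V1, W2} := by
  intro v hv w hw
  simp only [Finset.mem_insert, Finset.mem_singleton] at hv hw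
  rcases hv with rfl | rfl <;> rcases hw with rfl | rfl <;>
    simp [Gn, SimpleGraph.fromRel_adj]

lemma indepD2 : IsIndepF (Gn n) {V2, W1} := by
  intro v hv w hw
  simp only [Finset.mem_insert, Finset.mem_singleton] at hv hw
  rcases hv with rfl | rfl <;> rcases hw with rfl | rfl <;>
    simp [Gn, SimpleGraph.fromRel_adj]


lemma max_of (S : Finset (GnV n)) (hind : IsIndepF (Gn n) S)
    (h : ∀ x, x ∉ S → ∃ y ∈ S, (Gn n).Adj x y) : IsMaxIndepF (Gn n) S := by
  refine ⟨hind, fun M' hM' hsub => ?_⟩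
  refine Finset.Subset.antisymm ?_ hsub
  intro x hx
  by_contra hxS
  obtain ⟨y, hyS, hadj⟩ := h x hxS
  exact hM' x hx y (hsub hyS) hadj

lemma maxA (i : Fin n) : IsMaxIndepF (Gn n) {Y i, U i} := by
  refine max_of _ (indepA i) ?_
  intro x hx
  simp only [Finset.mem_insert, Finset.mem_singleton, not_or] at hx
  obtain ⟨h1, h2⟩ := hx
  rcases x with j | j | k
  · have hji : j ≠ i := by simpa using h1
    exact ⟨Y i, by simp, by simp [Gn, SimpleGraph.fromRel_adj, hji]⟩
  · have hji : j ≠ i := by simpa using h2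
    exact ⟨Y i, by simp, by simp [Gn, SimpleGraph.fromRel_adj, Ne.symm hji]⟩
  · fin_cases k
    · exact ⟨Y i, by simp, by simp [Gn, SimpleGraph.fromRel_adj]⟩
    · exact ⟨Y i, by simp, by simp [Gn, SimpleGraph.fromRel_adj]⟩
    · exact ⟨U i, by simp, by simp [Gn, SimpleGraph.fromRel_adj]⟩
    · exact ⟨U i, by simp, by simp [Gn, SimpleGraph.fromRel_adj]⟩

lemma maxB (i : Fin n) : IsMaxIndepF (Gn n) {Y i, W1, W2} := by
  refine max_of _ (indepB i) ?_
  intro x hx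
  simp only [Finset.mem_insert, Finset.mem_singleton, not_or] at hx
  obtain ⟨h1, h2, h3⟩ := hx
  rcases x with j | j | k
  · have hji : j ≠ i := by simpa using h1
    exact ⟨Y i, by simp, by simp [Gn, SimpleGraph.fromRel_adj, hji]⟩
  · exact ⟨W1, by simp, by simp [Gn, SimpleGraph.fromRel_adj]⟩
  · fin_cases k
    · exact ⟨Y i, by simp, by simp [Gn, SimpleGraph.fromRel_adj]⟩
    · exact ⟨Y i, by simp, by simp [Gn, SimpleGraph.fromRel_adj]⟩
    · simp at h2
    · simp at h3

lemma maxC1 (hn : 0 < n) : IsMaxIndepF (Gn n) (insert V1 (Us n)) := by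
  refine max_of _ indepC1 ?_
  intro x hx
  simp only [Finset.mem_insert, mem_Us, not_or, not_exists] at hx
  obtain ⟨h1, h2⟩ := hx
  rcases x with j | j | k
  · exact ⟨V1, by simp, by simp [Gn, SimpleGraph.fromRel_adj]⟩
  · exact absurd rfl (h2 j)
  · fin_cases k
    · simp at h1
    · exact ⟨V1, by simp, by simp [Gn, SimpleGraph.fromRel_adj]⟩
    · exact ⟨V1, by simp, by simp [Gn, SimpleGraph.fromRel_adj]⟩
    · exact ⟨U ⟨0, hn⟩, by simp [mem_Us], by simp [Gn, SimpleGraph.fromRel_adj]⟩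

lemma maxC2 (hn : 0 < n) : IsMaxIndepF (Gn n) (insert V2 (Us n)) := by
  refine max_of _ indepC2 ?_
  intro x hx
  simp only [Finset.mem_insert, mem_Us, not_or, not_exists] at hx
  obtain ⟨h1, h2⟩ := hx
  rcases x with j | j | k
  · exact ⟨V2, by simp, by simp [Gn, SimpleGraph.fromRel_adj]⟩
  · exact absurd rfl (h2 j)
  · fin_cases k
    · exact ⟨V2, by simp, by simp [Gn, SimpleGraph.fromRel_adj]⟩
    · simp at h1
    · exact ⟨U ⟨0, hn⟩, by simp [mem_Us], by simp [Gn, SimpleGraph.fromRel_adj]⟩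
    · exact ⟨V2, by simp, by simp [Gn, SimpleGraph.fromRel_adj]⟩

lemma maxD1 (hn : 0 < n) : IsMaxIndepF (Gn n) {V1, W2} := by
  refine max_of _ indepD1 ?_
  intro x hx
  simp only [Finset.mem_insert, Finset.mem_singleton, not_or] at hx
  obtain ⟨h1, h2⟩ := hx
  rcases x with j | j | k
  · exact ⟨V1, by simp, by simp [Gn, SimpleGraph.fromRel_adj]⟩
  · exact ⟨W2, by simp, by simp [Gn, SimpleGraph.fromRel_adj]⟩
  · fin_cases k
    · simp at h1
    · exact ⟨V1, by simp, by simp [Gn, SimpleGraph.fromRel_adj]⟩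
    · exact ⟨V1, by simp, by simp [Gn, SimpleGraph.fromRel_adj]⟩
    · simp at h2

lemma maxD2 (hn : 0 < n) : IsMaxIndepF (Gn n) {V2, W1} := by
  refine max_of _ indepD2 ?_
  intro x hx
  simp only [Finset.mem_insert, Finset.mem_singleton, not_or] at hx
  obtain ⟨h1, h2⟩ := hx
  rcases x with j | j | k
  · exact ⟨V2, by simp, by simp [Gn, SimpleGraph.fromRel_adj]⟩
  · exact ⟨W1, by simp, by simp [Gn, SimpleGraph.fromRel_adj]⟩
  · fin_cases k
    · exact ⟨V2, by simp, by simp [Gn, SimpleGraph.fromRel_adj]⟩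
    · simp at h1
    · simp at h2
    · exact ⟨V2, by simp, by simp [Gn, SimpleGraph.fromRel_adj]⟩


lemma classify (hn : 0 < n) (M : Finset (GnV n)) (hM : IsMaxIndepF (Gn n) M) :
    (∃ i, M = {Y i, U i}) ∨ (∃ i, M = ({Y i, W1, W2} : Finset (GnV n))) ∨
    M = insert V1 (Us n) ∨ M = insert V2 (Us n) ∨
    M = ({V1, W2} : Finset (GnV n)) ∨ M = ({V2, W1} : Finset (GnV n)) := by
  obtain ⟨hind, hmax⟩ := hM
  by_cases hY : ∃ i, Y i ∈ M
  · obtain ⟨i, hYi⟩ := hY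
    by_cases hU : U i ∈ M
    · left
      refine ⟨i, (hmax _ (indepA i) ?_).symm⟩
      intro x hx
      simp only [Finset.mem_insert, Finset.mem_singleton]
      rcases x with j | j | k
      · by_contra hne
        simp only [not_or] at hne
        have hji : j ≠ i := by simpa using hne.1
        exact hind _ hx _ hYi (by simp [Gn, SimpleGraph.fromRel_adj, hji])
      · by_contra hne
        simp only [not_or] at hne
        have hji : j ≠ i := by simpa using hne.2
        exact hind _ hx _ hYi (by simp [Gn, SimpleGraph.fromRel_adj, Ne.symm hji])
      · exfalso; fin_cases k
        · exact hind _ hx _ hYi (by simp [Gn, SimpleGraph.fromRel_adj])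
        · exact hind _ hx _ hYi (by simp [Gn, SimpleGraph.fromRel_adj])
        · exact hind _ hx _ hU (by simp [Gn, SimpleGraph.fromRel_adj])
        · exact hind _ hx _ hU (by simp [Gn, SimpleGraph.fromRel_adj])
    · right; left
      refine ⟨i, (hmax _ (indepB i) ?_).symm⟩
      intro x hx
      simp only [Finset.mem_insert, Finset.mem_singleton]
      rcases x with j | j | k
      · by_contra hne
        simp only [not_or] at hne
        have hji : j ≠ i := by simpa using hne.1
        exact hind _ hx _ hYi (by simp [Gn, SimpleGraph.fromRel_adj, hji])
      · exfalso
        by_cases hji : j = i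
        · exact hU (hji ▸ hx)
        · exact hind _ hx _ hYi (by simp [Gn, SimpleGraph.fromRel_adj, Ne.symm hji])
      · fin_cases k
        · exact absurd (hind _ hx _ hYi) (by simp [Gn, SimpleGraph.fromRel_adj])
        · exact absurd (hind _ hx _ hYi) (by simp [Gn, SimpleGraph.fromRel_adj])
        · simp
        · simp
  · push_neg at hY
    by_cases hV1 : V1 ∈ M
    · by_cases hW2 : W2 ∈ M
      · right; right; right; right; left
        refine (hmax _ indepD1 ?_).symm
        intro x hx
        simp only [Finset.mem_insert, Finset.mem_singleton]
        rcases x with j | j | k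
        · exact absurd hx (hY j)
        · exact absurd (hind _ hx _ hW2) (by simp [Gn, SimpleGraph.fromRel_adj])
        · fin_cases k
          · simp
          · exact absurd (hind _ hx _ hW2) (by simp [Gn, SimpleGraph.fromRel_adj])
          · exact absurd (hind _ hx _ hV1) (by simp [Gn, SimpleGraph.fromRel_adj])
          · simp
      · right; right; left
        refine (hmax _ indepC1 ?_).symm
        intro x hx
        simp only [Finset.mem_insert, mem_Us]
        rcases x with j | j | k
        · exact absurd hx (hY j)
        · exact Or.inr ⟨j, rfl⟩
        · fin_cases k
          · simp
          · exact absurd (hind _ hx _ hV1) (by simp [Gn, SimpleGraph.fromRel_adj])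
          · exact absurd (hind _ hx _ hV1) (by simp [Gn, SimpleGraph.fromRel_adj])
          · exact absurd hx hW2
    · by_cases hV2 : V2 ∈ M
      · by_cases hW1 : W1 ∈ M
        · right; right; right; right; right
          refine (hmax _ indepD2 ?_).symm
          intro x hx
          simp only [Finset.mem_insert, Finset.mem_singleton]
          rcases x with j | j | k
          · exact absurd hx (hY j)
          · exact absurd (hind _ hx _ hW1) (by simp [Gn, SimpleGraph.fromRel_adj])
          · fin_cases k
            · exact absurd (hind _ hx _ hW1) (by simp [Gn, SimpleGraph.fromRel_adj])
            · simp
            · simp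
            · exact absurd (hind _ hx _ hV2) (by simp [Gn, SimpleGraph.fromRel_adj])
        · right; right; right; left
          refine (hmax _ indepC2 ?_).symm
          intro x hx
          simp only [Finset.mem_insert, mem_Us]
          rcases x with j | j | k
          · exact absurd hx (hY j)
          · exact Or.inr ⟨j, rfl⟩
          · fin_cases k
            · exact absurd hx hV1
            · simp
            · exact absurd hx hW1
            · exact absurd (hind _ hx _ hV2) (by simp [Gn, SimpleGraph.fromRel_adj])
      · exfalso
        by_cases hU : ∃ j, U j ∈ M
        · obtain ⟨j0, hj0⟩ := hU
          have hsub : M ⊆ insert V1 (Us n) := by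
            intro x hx
            simp only [Finset.mem_insert, mem_Us]
            rcases x with j | j | k
            · exact absurd hx (hY j)
            · exact Or.inr ⟨j, rfl⟩
            · fin_cases k
              · simp
              · exact absurd hx hV2
              · exact absurd (hind _ hx _ hj0) (by simp [Gn, SimpleGraph.fromRel_adj])
              · exact absurd (hind _ hx _ hj0) (by simp [Gn, SimpleGraph.fromRel_adj])
          have := hmax _ indepC1 hsub
          exact hV1 (this ▸ Finset.mem_insert_self _ _)
        · push_neg at hU
          have hsub : M ⊆ ({Y ⟨0, hn⟩, W1, W2} : Finset (GnV n)) := by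
            intro x hx
            simp only [Finset.mem_insert, Finset.mem_singleton]
            rcases x with j | j | k
            · exact absurd hx (hY j)
            · exact absurd hx (hU j)
            · fin_cases k
              · exact absurd hx hV1
              · exact absurd hx hV2
              · simp
              · simp
          have := hmax _ (indepB ⟨0, hn⟩) hsub
          exact hY _ (this ▸ Finset.mem_insert_self _ _)


variable (F : Type) [Field F]

/-- The first spanning vector. -/
def eV (n : ℕ) : GnV n → F := Sum.elim (fun _ => 1) (Sum.elim (fun _ => 0) ![1, 1, 0, 0])

/-- The second spanning vector. -/
def fV (n : ℕ) : GnV n → F := Sum.elim (fun _ => -2) (Sum.elim (fun _ => 2) ![-1, -1, 1, 1])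

lemma sumA (w : GnV n → F) (i : Fin n) :
    ∑ v ∈ ({Y i, U i} : Finset (GnV n)), w v = w (Y i) + w (U i) :=
  Finset.sum_pair (by simp)

lemma sumB (w : GnV n → F) (i : Fin n) :
    ∑ v ∈ ({Y i, W1, W2} : Finset (GnV n)), w v = w (Y i) + (w W1 + w W2) := by
  rw [Finset.sum_insert (by simp), Finset.sum_pair (by simp)]

lemma sumUs (w : GnV n → F) : ∑ v ∈ Us n, w v = ∑ j : Fin n, w (U j) := by
  rw [Us, Finset.sum_image (by intro a _ b _ h; simpa using h)]

lemma sumC1 (w : GnV n → F) :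
    ∑ v ∈ insert V1 (Us n), w v = w V1 + ∑ j : Fin n, w (U j) := by
  rw [Finset.sum_insert (by simp [mem_Us]), sumUs]

lemma sumC2 (w : GnV n → F) :
    ∑ v ∈ insert V2 (Us n), w v = w V2 + ∑ j : Fin n, w (U j) := by
  rw [Finset.sum_insert (by simp [mem_Us]), sumUs]

lemma sumD1 (w : GnV n → F) :
    ∑ v ∈ ({V1, W2} : Finset (GnV n)), w v = w V1 + w W2 :=
  Finset.sum_pair (by simp)

lemma sumD2 (w : GnV n → F) :
    ∑ v ∈ ({V2, W1} : Finset (GnV n)), w v = w V2 + w W1 :=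
  Finset.sum_pair (by simp)

lemma sum_e (hn : 0 < n) (M : Finset (GnV n)) (hM : IsMaxIndepF (Gn n) M) :
    ∑ v ∈ M, eV F n v = 1 := by
  rcases classify hn M hM with ⟨i, rfl⟩ | ⟨i, rfl⟩ | rfl | rfl | rfl | rfl <;>
    simp [sumA, sumB, sumC1, sumC2, sumD1, sumD2, eV]

lemma sum_f (hn : 0 < n) (h2n : ((2 * n : ℕ) : F) = 1) (M : Finset (GnV n))
    (hM : IsMaxIndepF (Gn n) M) : ∑ v ∈ M, fV F n v = 0 := by
  have h2n' : (n : F) * 2 = 1 := by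
    have h : ((2 * n : ℕ) : F) = (n : F) * 2 := by push_cast; ring
    rw [← h, h2n]
  rcases classify hn M hM with ⟨i, rfl⟩ | ⟨i, rfl⟩ | rfl | rfl | rfl | rfl <;>
    simp [sumA, sumB, sumC1, sumC2, sumD1, sumD2, fV] <;>
    first
      | linear_combination h2n'
      | norm_num

lemma e_mem (hn : 0 < n) : eV F n ∈ wcSpace F (Gn n) := by
  intro M N hM hN
  rw [sum_e F hn M hM, sum_e F hn N hN]

lemma f_mem (hn : 0 < n) (h2n : ((2 * n : ℕ) : F) = 1) : fV F n ∈ wcSpace F (Gn n) := by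
  intro M N hM hN
  rw [sum_f F hn h2n M hM, sum_f F hn h2n N hN]

lemma extract (hn : 0 < n) (w : GnV n → F) (hw : w ∈ wcSpace F (Gn n)) :
    ∃ s t : F, ((2 * n - 1 : ℕ) : F) * t = 0 ∧ w = s • eV F n + t • fV F n := by
  have key : ∀ M N : Finset (GnV n), IsMaxIndepF (Gn n) M → IsMaxIndepF (Gn n) N →
      ∑ v ∈ M, w v = ∑ v ∈ N, w v := hw
  set i0 : Fin n := ⟨0, hn⟩ with hi0
  have h1 : ∀ i, w (U i) = w W1 + w W2 := by
    intro i
    have h := key _ _ (maxA i) (maxB i)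
    rw [sumA, sumB] at h
    linear_combination h
  have h2 : w V1 = w V2 := by
    have h := key _ _ (maxC1 hn) (maxC2 hn)
    rw [sumC1, sumC2] at h
    linear_combination h
  have h3 : w W2 = w W1 := by
    have h := key _ _ (maxD1 hn) (maxD2 hn)
    rw [sumD1, sumD2] at h
    linear_combination h - h2
  have hu : ∀ i, w (U i) = 2 * w W1 := by
    intro i; rw [h1 i, h3]; ring
  have h4 : ((2 * n - 1 : ℕ) : F) * w W1 = 0 := by
    have h := key _ _ (maxC1 hn) (maxD1 hn)
    rw [sumC1, sumD1] at h
    have hsum : ∑ j : Fin n, w (U j) = (n : F) * (2 * w W1) := by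
      simp [hu, Finset.sum_const, Finset.card_univ, nsmul_eq_mul]
    rw [hsum, h3] at h
    have hcast : ((2 * n - 1 : ℕ) : F) = 2 * (n : F) - 1 := by
      have h1n : (1 : ℕ) ≤ 2 * n := by omega
      push_cast [Nat.cast_sub h1n]
      ring
    rw [hcast]
    linear_combination h
  have h5 : ∀ i, w (Y i) = (w (Y i0) + w (U i0)) - 2 * w W1 := by
    intro i
    have h := key _ _ (maxA i) (maxA i0)
    rw [sumA, sumA] at h
    linear_combination h - hu i
  have h6 : w V1 = (w (Y i0) + w (U i0)) - w W1 := by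
    have h := key _ _ (maxD1 hn) (maxA i0)
    rw [sumD1, sumA] at h
    linear_combination h - h3
  refine ⟨w (Y i0) + w (U i0), w W1, h4, ?_⟩
  funext x
  rcases x with i | i | k
  · simp only [Pi.add_apply, Pi.smul_apply, smul_eq_mul, eV, fV, Sum.elim_inl]
    linear_combination h5 i
  · simp only [Pi.add_apply, Pi.smul_apply, smul_eq_mul, eV, fV, Sum.elim_inr, Sum.elim_inl]
    linear_combination hu i
  · fin_cases k <;> simp [eV, fV]
    · linear_combination h6
    · linear_combination h6 - h2
    · exact h3

end WCAux

/-- For `n ≥ 2`, the graph `Gₙ` has `2n + 4` vertices and, for every field `F`,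
`wcdim(Gₙ, F) = 2` if `char F ∣ 2n − 1` and `wcdim(Gₙ, F) = 1` otherwise. -/
theorem wcdim_Gn (n : ℕ) (hn : 2 ≤ n) :
    Fintype.card (GnV n) = 2 * n + 4 ∧
    ∀ (F : Type) [Field F],
      (ringChar F ∣ 2 * n - 1 → wcdim F (Gn n) = 2) ∧
      (¬ ringChar F ∣ 2 * n - 1 → wcdim F (Gn n) = 1) := by
  have hn0 : 0 < n := by omega
  constructor
  · have : Fintype.card (GnV n) = n + (n + 4) := by simp
    omega
  · intro F _
    constructor
    · intro hdvd
      have h2n1 : ((2 * n - 1 : ℕ) : F) = 0 := (ringChar.spec F _).2 hdvd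
      have h2n : ((2 * n : ℕ) : F) = 1 := by
        rw [Nat.cast_sub (by omega : (1:ℕ) ≤ 2*n)] at h2n1
        push_cast at h2n1 ⊢
        linear_combination h2n1
      have hli : LinearIndependent F ![WCAux.eV F n, WCAux.fV F n] := by
        rw [LinearIndependent.pair_iff]
        intro s t hst
        have hW := congrFun hst (WCAux.W1 (n := n))
        have hV := congrFun hst (WCAux.V1 (n := n))
        simp [WCAux.eV, WCAux.fV] at hW hV
        constructor
        · linear_combination hV + hW
        · linear_combination hW
      have hspan : wcSpace F (Gn n) =
          Submodule.span F (Set.range ![WCAux.eV F n, WCAux.fV F n]) := by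
        apply le_antisymm
        · intro w hw
          obtain ⟨s, t, -, rfl⟩ := WCAux.extract F hn0 w hw
          exact Submodule.add_mem _
            (Submodule.smul_mem _ _ (Submodule.subset_span ⟨0, rfl⟩))
            (Submodule.smul_mem _ _ (Submodule.subset_span ⟨1, rfl⟩))
        · rw [Submodule.span_le]
          rintro x ⟨i, rfl⟩
          fin_cases i
          · exact WCAux.e_mem F hn0
          · exact WCAux.f_mem F hn0 h2n
      show Module.finrank F (wcSpace F (Gn n)) = 2
      rw [hspan, finrank_span_eq_card hli, Fintype.card_fin]
    · intro hndvd
      have hne : ((2 * n - 1 : ℕ) : F) ≠ 0 := fun h0 => hndvd ((ringChar.spec F _).1 h0)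
      have hspan : wcSpace F (Gn n) = F ∙ (WCAux.eV F n) := by
        apply le_antisymm
        · intro w hw
          obtain ⟨s, t, h, rfl⟩ := WCAux.extract F hn0 w hw
          have ht : t = 0 := (mul_eq_zero.1 h).resolve_left hne
          rw [ht, zero_smul, add_zero]
          exact Submodule.smul_mem _ _ (Submodule.mem_span_singleton_self _)
        · rw [Submodule.span_le]
          exact Set.singleton_subset_iff.2 (WCAux.e_mem F hn0)
      show Module.finrank F (wcSpace F (Gn n)) = 1
      rw [hspan, finrank_span_singleton]
      intro h
      simpa [WCAux.eV] using congrFun h (WCAux.V1 (n := n))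
end

section
/- For every odd prime p, the graph G_{(p+1)/2} from the construction (on 2·((p+1)/2) + 4 = p + 5 vertices) satisfies wcdim(G_{(p+1)/2}, 𝔽_p) = 2 and wcdim(G_{(p+1)/2}, ℚ) = 1, since 2·((p+1)/2) − 1 = p. -/
/-!
The maximal independent sets of `Gₙ` are `U ∪ {v₁}`, `U ∪ {v₂}`, `{yᵢ, uᵢ}`, `{yᵢ, w₁, w₂}`,
`{v₁, w₂}` and `{v₂, w₁}`, where `U = {u₁,…,uₙ}`. Equating the weights of these sets forces a
well-covered weighting to take a value `a` on every `yᵢ`, `a + b` on `v₁, v₂`, `b` on `w₁, w₂`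
and `2b` on every `uᵢ`, subject to the single relation `(2n - 1) b = 0`. So the well-covered space
is spanned by the indicator of the clique `{y₁,…,yₙ, v₁, v₂}`, together with the weighting
`(a, b) = (0, 1)` exactly when `2n = 1` in `F`. For `n = (p + 1) / 2` we have `2n - 1 = p`.
-/

open Finset

theorem IsMaxIndepF.eq_of_subset {V : Type*} {G : SimpleGraph V} {M S : Finset V}
    (hM : IsMaxIndepF G M) (hS : IsIndepF G S) (h : M ⊆ S) : M = S :=
  (hM.2 S hS h).symm

theorem isMaxIndepF_of_forall_exists_adj {V : Type*} {G : SimpleGraph V} {S : Finset V}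
    (hS : IsIndepF G S) (h : ∀ x ∉ S, ∃ m ∈ S, G.Adj x m) : IsMaxIndepF G S :=
  ⟨hS, fun M hM hSM => hSM.antisymm' fun x hx => by
    by_contra hxS
    obtain ⟨m, hm, hxm⟩ := h x hxS
    exact hM x hx m (hSM hm) hxm⟩

theorem mem_wcSpace_of_forall_sum_eq {F : Type*} [Field F] {V : Type*} {G : SimpleGraph V}
    {w : V → F} (c : F) (h : ∀ M, IsMaxIndepF G M → ∑ v ∈ M, w v = c) : w ∈ wcSpace F G :=
  fun M N hM hN => (h M hM).trans (h N hN).symm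

namespace Gn

variable {n : ℕ}

abbrev y (i : Fin n) : GnV n := Sum.inl i
abbrev u (i : Fin n) : GnV n := Sum.inr (Sum.inl i)
abbrev v₁ : GnV n := Sum.inr (Sum.inr 0)
abbrev v₂ : GnV n := Sum.inr (Sum.inr 1)
abbrev w₁ : GnV n := Sum.inr (Sum.inr 2)
abbrev w₂ : GnV n := Sum.inr (Sum.inr 3)

@[elab_as_elim]
theorem vertex_cases {P : GnV n → Prop} (hy : ∀ i, P (y i)) (hu : ∀ i, P (u i))
    (hv₁ : P v₁) (hv₂ : P v₂) (hw₁ : P w₁) (hw₂ : P w₂) (x : GnV n) : P x := by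
  rcases x with i | i | c
  exacts [hy i, hu i, by fin_cases c <;> assumption]

def A (v : GnV n) : Finset (GnV n) := insert v (univ.image u)
def B (i : Fin n) : Finset (GnV n) := {y i, u i}
def C (i : Fin n) : Finset (GnV n) := {y i, w₁, w₂}
def D₁ : Finset (GnV n) := {v₁, w₂}
def D₂ : Finset (GnV n) := {v₂, w₁}

theorem isMaxIndepF_B (i : Fin n) : IsMaxIndepF (Gn n) (B i) := by
  refine isMaxIndepF_of_forall_exists_adj ?_ ?_ <;>
    simp [IsIndepF, B, Gn, SimpleGraph.fromRel_adj, Fin.forall_fin_succ, eq_comm]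

theorem isMaxIndepF_C (i : Fin n) : IsMaxIndepF (Gn n) (C i) := by
  refine isMaxIndepF_of_forall_exists_adj ?_ ?_ <;>
    simp [IsIndepF, C, Gn, SimpleGraph.fromRel_adj, Fin.forall_fin_succ, eq_comm]

theorem isMaxIndepF_D₁ : IsMaxIndepF (Gn n) D₁ := by
  refine isMaxIndepF_of_forall_exists_adj ?_ ?_ <;>
    simp [IsIndepF, D₁, Gn, SimpleGraph.fromRel_adj, Fin.forall_fin_succ]

theorem isMaxIndepF_D₂ : IsMaxIndepF (Gn n) D₂ := by
  refine isMaxIndepF_of_forall_exists_adj ?_ ?_ <;>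
    simp [IsIndepF, D₂, Gn, SimpleGraph.fromRel_adj, Fin.forall_fin_succ]

section Sums

variable {β : Type*} [AddCommMonoid β] (f : GnV n → β)

theorem sum_A {v : GnV n} (hv : v = v₁ ∨ v = v₂) : ∑ x ∈ A v, f x = f v + ∑ i, f (u i) := by
  rw [A, sum_insert (by rcases hv with rfl | rfl <;> simp),
    sum_image fun _ _ _ _ h => by simpa using h]

theorem sum_B (i : Fin n) : ∑ x ∈ B i, f x = f (y i) + f (u i) := sum_pair (by simp)

theorem sum_C (i : Fin n) : ∑ x ∈ C i, f x = f (y i) + (f w₁ + f w₂) := by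
  rw [C, sum_insert (by simp), sum_pair (by simp)]

theorem sum_D₁ : ∑ x ∈ D₁, f x = f v₁ + f w₂ := sum_pair (by simp)

theorem sum_D₂ : ∑ x ∈ D₂, f x = f v₂ + f w₁ := sum_pair (by simp)

end Sums

variable {F : Type*} [Field F]

variable (n F) in
def cliqueWeight : GnV n → F := Sum.elim 1 (Sum.elim 0 fun k => if k = 0 ∨ k = 1 then 1 else 0)

variable (n F) in
def charWeight : GnV n → F := Sum.elim 0 (Sum.elim 2 1)

variable [NeZero n]

theorem isMaxIndepF_A {v : GnV n} (hv : v = v₁ ∨ v = v₂) : IsMaxIndepF (Gn n) (A v) := by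
  rcases hv with rfl | rfl <;> refine isMaxIndepF_of_forall_exists_adj ?_ ?_ <;>
    simp [IsIndepF, A, Gn, SimpleGraph.fromRel_adj, Fin.forall_fin_succ]

theorem eq_of_isMaxIndepF {M : Finset (GnV n)} (hM : IsMaxIndepF (Gn n) M) :
    M = A v₁ ∨ M = A v₂ ∨ (∃ i, M = B i) ∨ (∃ i, M = C i) ∨ M = D₁ ∨ M = D₂ := by
  have hind := hM.1
  by_cases hy : ∃ i, y i ∈ M
  · obtain ⟨i, hi⟩ := hy
    by_cases hu : u i ∈ M
    · refine .inr <| .inr <| .inl ⟨i, hM.eq_of_subset (isMaxIndepF_B i).1 fun x hx => ?_⟩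
      have := hind _ hi _ hx; have := hind _ hu _ hx
      induction x using vertex_cases <;> simp_all [B, Gn, SimpleGraph.fromRel_adj]
    · refine .inr <| .inr <| .inr <| .inl ⟨i, hM.eq_of_subset (isMaxIndepF_C i).1 fun x hx => ?_⟩
      have := hind _ hi _ hx
      induction x using vertex_cases <;> simp_all [C, Gn, SimpleGraph.fromRel_adj]
  by_cases hu : ∃ i, u i ∈ M
  · obtain ⟨i, hi⟩ := hu
    by_cases hv : v₂ ∈ M
    · refine .inr <| .inl <| hM.eq_of_subset (isMaxIndepF_A (.inr rfl)).1 fun x hx => ?_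
      have := hind _ hi _ hx; have := hind _ hv _ hx
      induction x using vertex_cases <;> simp_all [A, Gn, SimpleGraph.fromRel_adj]
    · refine .inl <| hM.eq_of_subset (isMaxIndepF_A (.inl rfl)).1 fun x hx => ?_
      have := hind _ hi _ hx
      induction x using vertex_cases <;> simp_all [A, Gn, SimpleGraph.fromRel_adj]
  by_cases hv₁ : v₁ ∈ M
  · refine .inr <| .inr <| .inr <| .inr <| .inl <| hM.eq_of_subset isMaxIndepF_D₁.1 fun x hx => ?_
    have := hind _ hv₁ _ hx
    induction x using vertex_cases <;> simp_all [D₁, Gn, SimpleGraph.fromRel_adj]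
  by_cases hv₂ : v₂ ∈ M
  · refine .inr <| .inr <| .inr <| .inr <| .inr <| hM.eq_of_subset isMaxIndepF_D₂.1 fun x hx => ?_
    have := hind _ hv₂ _ hx
    induction x using vertex_cases <;> simp_all [D₂, Gn, SimpleGraph.fromRel_adj]
  · refine .inr <| .inr <| .inr <| .inl ⟨0, hM.eq_of_subset (isMaxIndepF_C 0).1 fun x hx => ?_⟩
    induction x using vertex_cases <;> simp_all [C]

theorem cliqueWeight_mem : cliqueWeight n F ∈ wcSpace F (Gn n) := by
  refine mem_wcSpace_of_forall_sum_eq 1 fun M hM => ?_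
  rcases eq_of_isMaxIndepF hM with rfl | rfl | ⟨i, rfl⟩ | ⟨i, rfl⟩ | rfl | rfl <;>
    simp [sum_A, sum_B, sum_C, sum_D₁, sum_D₂, cliqueWeight]

theorem charWeight_mem (h : (2 * n : F) = 1) : charWeight n F ∈ wcSpace F (Gn n) := by
  refine mem_wcSpace_of_forall_sum_eq 2 fun M hM => ?_
  rcases eq_of_isMaxIndepF hM with rfl | rfl | ⟨i, rfl⟩ | ⟨i, rfl⟩ | rfl | rfl <;>
    norm_num [sum_A, sum_B, sum_C, sum_D₁, sum_D₂, charWeight, mul_comm _ (2 : F), h]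

theorem eq_add_of_mem_wcSpace {f : GnV n → F} (hf : f ∈ wcSpace F (Gn n)) :
    f = f (y 0) • cliqueWeight n F + f w₁ • charWeight n F ∧ (2 * n - 1 : F) * f w₁ = 0 := by
  set t := ∑ x ∈ B 0, f x
  have hS : ∀ S, IsMaxIndepF (Gn n) S → ∑ x ∈ S, f x = t := fun S hS =>
    hf S (B 0) hS (isMaxIndepF_B 0)
  have hB (i) : f (y i) + f (u i) = t := by simpa [sum_B] using hS _ (isMaxIndepF_B i)
  have hC (i) : f (y i) + (f w₁ + f w₂) = t := by simpa [sum_C] using hS _ (isMaxIndepF_C i)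
  have hA₁ : f v₁ + ∑ i, f (u i) = t := by simpa [sum_A] using hS _ (isMaxIndepF_A (.inl rfl))
  have hA₂ : f v₂ + ∑ i, f (u i) = t := by simpa [sum_A] using hS _ (isMaxIndepF_A (.inr rfl))
  have hD₁ : f v₁ + f w₂ = t := by simpa [sum_D₁] using hS _ isMaxIndepF_D₁
  have hD₂ : f v₂ + f w₁ = t := by simpa [sum_D₂] using hS _ isMaxIndepF_D₂
  have hy (i) : f (y i) = f (y 0) := by linear_combination hC i - hC 0
  have hw₂ : f w₂ = f w₁ := by linear_combination hD₁ - hD₂ - hA₁ + hA₂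
  have hu (i) : f (u i) = 2 * f w₁ := by linear_combination hB i - hC i + hw₂
  have ht : t = f (y 0) + 2 * f w₁ := by linear_combination -hC 0 + hw₂
  have hv₁ : f v₁ = f (y 0) + f w₁ := by linear_combination hD₁ + ht - hw₂
  have hv₂ : f v₂ = f (y 0) + f w₁ := by linear_combination hD₂ + ht
  have hU : ∑ i, f (u i) = n * (2 * f w₁) := by simp [hu]
  refine ⟨funext fun x => ?_, by linear_combination hA₁ - hv₁ - hU + ht⟩
  induction x using vertex_cases <;>
    simp [cliqueWeight, charWeight, hy, hu, hv₁, hv₂, hw₂, mul_comm]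

noncomputable def wcSpaceEquivProd (h : (2 * n : F) = 1) : wcSpace F (Gn n) ≃ₗ[F] F × F where
  toFun f := (f.1 (y 0), f.1 w₁)
  map_add' _ _ := rfl
  map_smul' _ _ := rfl
  invFun a := ⟨a.1 • cliqueWeight n F + a.2 • charWeight n F,
    add_mem (Submodule.smul_mem _ _ cliqueWeight_mem) (Submodule.smul_mem _ _ (charWeight_mem h))⟩
  left_inv f := Subtype.ext (eq_add_of_mem_wcSpace f.2).1.symm
  right_inv a := by simp [cliqueWeight, charWeight]

noncomputable def wcSpaceEquivSelf (h : (2 * n : F) ≠ 1) : wcSpace F (Gn n) ≃ₗ[F] F where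
  toFun f := f.1 (y 0)
  map_add' _ _ := rfl
  map_smul' _ _ := rfl
  invFun a := ⟨a • cliqueWeight n F, Submodule.smul_mem _ _ cliqueWeight_mem⟩
  left_inv f := by
    obtain ⟨hf, hw₁⟩ := eq_add_of_mem_wcSpace f.2
    have : f.1 w₁ = 0 := (mul_eq_zero.1 hw₁).resolve_left (sub_ne_zero.2 h)
    exact Subtype.ext (by rw [hf, this, zero_smul, add_zero])
  right_inv a := by simp [cliqueWeight]

theorem wcdim_eq_two (h : (2 * n : F) = 1) : wcdim F (Gn n) = 2 := by
  rw [wcdim, (wcSpaceEquivProd h).finrank_eq, Module.finrank_prod, Module.finrank_self]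

theorem wcdim_eq_one (h : (2 * n : F) ≠ 1) : wcdim F (Gn n) = 1 := by
  rw [wcdim, (wcSpaceEquivSelf h).finrank_eq, Module.finrank_self]

end Gn

/-- For an odd prime `p`, the graph `G_{(p+1)/2}` on `p + 5` vertices has well-covered
dimension `2` over `𝔽_p` and `1` over `ℚ`. -/
theorem wcdim_Gn_odd_prime (p : ℕ) [Fact p.Prime] (hodd : Odd p) :
    Fintype.card (GnV ((p + 1) / 2)) = p + 5 ∧
    wcdim (ZMod p) (Gn ((p + 1) / 2)) = 2 ∧
    wcdim ℚ (Gn ((p + 1) / 2)) = 1 := by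
  obtain ⟨m, rfl⟩ := hodd
  rw [show (2 * m + 1 + 1) / 2 = m + 1 by omega]
  refine ⟨by simp; omega, Gn.wcdim_eq_two ?_, Gn.wcdim_eq_one ?_⟩
  · have hp : ((2 * m + 1 : ℕ) : ZMod (2 * m + 1)) = 0 := ZMod.natCast_self _
    push_cast at hp ⊢
    linear_combination hp
  · norm_cast
    omega
end
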